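/- arXiv:1806.05951 — 4 statements merged into one kernel-verified Lean document; each statement's English description precedes it below -/
import Mathlib

section
/- If X has the Type I Pareto distribution Pa(α, x₀) with shape α > 1 and scale x₀ > 0, then the Zenga inequality curve of X is constant: λ(p) = 1/α for every p ∈ (0,1). -/
open MeasureTheory Real Set Filter

noncomputable section

/-- Generalized inverse (quantile function) of a CDF `F`:
`F⁻¹(p) = inf {x : F x ≥ p}`. -/
def quantile (F : ℝ → ℝ) (p : ℝ) : ℝ := sInf {x : ℝ | p ≤ F x}

/-- CDF of a real random variable `X` on a measure space. -/
def cdfOf {Ω : Type*} [MeasureSpace Ω] (X : Ω → ℝ) (x : ℝ) : ℝ :=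
  ((volume : Measure Ω) {ω | X ω ≤ x}).toReal

/-- First incomplete moment `Q(x) = E[X 1{X ≤ x}] / E[X]`. -/
def incMoment {Ω : Type*} [MeasureSpace Ω] (X : Ω → ℝ) (x : ℝ) : ℝ :=
  (∫ ω in {ω | X ω ≤ x}, X ω) / (∫ ω, X ω)

/-- The Zenga inequality curve `λ(p) = 1 - log(1 - Q(F⁻¹(p))) / log(1 - p)`. -/
def zenga {Ω : Type*} [MeasureSpace Ω] (X : Ω → ℝ) (p : ℝ) : ℝ :=
  1 - Real.log (1 - incMoment X (quantile (cdfOf X) p)) / Real.log (1 - p)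

/-- CDF of the Type I Pareto distribution `Pa(α, x₀)`. -/
def paretoCDF (α x₀ x : ℝ) : ℝ := if x₀ ≤ x then 1 - (x / x₀) ^ (-α) else 0

section ParetoAux

open ProbabilityTheory
open scoped NNReal ENNReal

variable {α x₀ : ℝ}

lemma pareto_div_rpow (hx₀ : 0 < x₀) {x : ℝ} (hx : 0 < x) (r : ℝ) :
    (x / x₀) ^ r = x ^ r * x₀ ^ (-r) := by
  rw [Real.div_rpow hx.le hx₀.le, Real.rpow_neg hx₀.le, div_eq_mul_inv]

lemma integrableOn_Iic_ite_rpow (hx₀ : 0 < x₀) {x : ℝ} (hx : x₀ ≤ x) (c r : ℝ) :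
    IntegrableOn (fun t : ℝ => if x₀ ≤ t then c * t ^ r else 0) (Iic x) := by
  have hset : Iic x = Iio x₀ ∪ Icc x₀ x := by
    ext t
    simp only [mem_Iic, mem_union, mem_Iio, mem_Icc]
    constructor
    · intro h
      rcases lt_or_ge t x₀ with h' | h'
      · exact Or.inl h'
      · exact Or.inr ⟨h', h⟩
    · rintro (h | ⟨h1, h2⟩)
      · linarith
      · exact h2
  have hcont : ContinuousOn (fun t : ℝ => c * t ^ r) (Icc x₀ x) :=
    continuousOn_const.mul (continuousOn_id.rpow_const fun t ht =>
      Or.inl (ne_of_gt (lt_of_lt_of_le hx₀ ht.1)))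
  have hint2 : IntegrableOn (fun t : ℝ => if x₀ ≤ t then c * t ^ r else 0) (Icc x₀ x) :=
    (hcont.integrableOn_Icc).congr_fun (fun t ht => (if_pos ht.1).symm) measurableSet_Icc
  have hint1 : IntegrableOn (fun t : ℝ => if x₀ ≤ t then c * t ^ r else 0) (Iio x₀) :=
    (integrableOn_congr_fun (fun t ht => if_neg (not_le.mpr ht)) measurableSet_Iio).mpr
      integrableOn_zero
  rw [hset]
  exact hint1.union hint2

lemma integral_Iic_ite_rpow (hx₀ : 0 < x₀) {x : ℝ} (hx : x₀ ≤ x) (c r : ℝ) (hr : r ≠ -1) :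
    ∫ t in Iic x, (if x₀ ≤ t then c * t ^ r else 0) =
      c * ((x ^ (r + 1) - x₀ ^ (r + 1)) / (r + 1)) := by
  have hx0 : 0 < x := lt_of_lt_of_le hx₀ hx
  have hset : Iic x = Iio x₀ ∪ Icc x₀ x := by
    ext t
    simp only [mem_Iic, mem_union, mem_Iio, mem_Icc]
    constructor
    · intro h
      rcases lt_or_ge t x₀ with h' | h'
      · exact Or.inl h'
      · exact Or.inr ⟨h', h⟩
    · rintro (h | ⟨h1, h2⟩)
      · linarith
      · exact h2
  have hdisj : Disjoint (Iio x₀) (Icc x₀ x) :=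
    disjoint_left.mpr fun t ht1 ht2 => absurd ht2.1 (not_le.mpr ht1)
  have hcont : ContinuousOn (fun t : ℝ => c * t ^ r) (Icc x₀ x) :=
    continuousOn_const.mul (continuousOn_id.rpow_const fun t ht =>
      Or.inl (ne_of_gt (lt_of_lt_of_le hx₀ ht.1)))
  have hint2 : IntegrableOn (fun t : ℝ => if x₀ ≤ t then c * t ^ r else 0) (Icc x₀ x) :=
    (hcont.integrableOn_Icc).congr_fun (fun t ht => (if_pos ht.1).symm) measurableSet_Icc
  have hint1 : IntegrableOn (fun t : ℝ => if x₀ ≤ t then c * t ^ r else 0) (Iio x₀) :=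
    (integrableOn_congr_fun (fun t ht => if_neg (not_le.mpr ht)) measurableSet_Iio).mpr
      integrableOn_zero
  rw [hset, setIntegral_union hdisj measurableSet_Icc hint1 hint2]
  have h1 : ∫ t in Iio x₀, (if x₀ ≤ t then c * t ^ r else 0) = 0 := by
    rw [setIntegral_congr_fun measurableSet_Iio fun t ht => if_neg (not_le.mpr ht)]
    simp
  have h2 : ∫ t in Icc x₀ x, (if x₀ ≤ t then c * t ^ r else 0) = ∫ t in Icc x₀ x, c * t ^ r :=
    setIntegral_congr_fun measurableSet_Icc fun t ht => if_pos ht.1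
  rw [h1, h2, zero_add, integral_Icc_eq_integral_Ioc, ← intervalIntegral.integral_of_le hx,
    intervalIntegral.integral_const_mul, integral_rpow (Or.inr ⟨hr, notMem_uIcc_of_lt hx₀ hx0⟩)]

lemma paretoMeasure_Iic (hα : 0 < α) (hx₀ : 0 < x₀) (x : ℝ) :
    paretoMeasure x₀ α (Iic x) = ENNReal.ofReal (paretoCDF α x₀ x) := by
  rw [paretoMeasure, withDensity_apply _ measurableSet_Iic]
  rcases lt_or_ge x x₀ with h | h
  · have h0 : ∫⁻ y in Iic x, paretoPDF x₀ α y = 0 := by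
      refine le_antisymm ?_ (zero_le)
      calc ∫⁻ y in Iic x, paretoPDF x₀ α y
          ≤ ∫⁻ y in Iio x₀, paretoPDF x₀ α y :=
            lintegral_mono_set fun t ht => lt_of_le_of_lt ht h
        _ = 0 := lintegral_paretoPDF_of_le le_rfl
    rw [h0, paretoCDF, if_neg (not_le.mpr h), ENNReal.ofReal_zero]
  · have hx0 : 0 < x := lt_of_lt_of_le hx₀ h
    have hnn : 0 ≤ᵐ[volume.restrict (Iic x)] paretoPDFReal x₀ α :=
      ae_of_all _ fun t => paretoPDFReal_nonneg hx₀.le hα.le t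
    have hfi : IntegrableOn (paretoPDFReal x₀ α) (Iic x) :=
      integrableOn_Iic_ite_rpow hx₀ h (α * x₀ ^ α) (-(α + 1))
    have hpdf : (fun y => paretoPDF x₀ α y) = fun y => ENNReal.ofReal (paretoPDFReal x₀ α y) := rfl
    rw [hpdf, ← ofReal_integral_eq_lintegral_ofReal hfi hnn]
    congr 1
    have hval := integral_Iic_ite_rpow hx₀ h (α * x₀ ^ α) (-(α + 1))
      (fun hcon => hα.ne' (by linarith))
    have heq : ∫ t in Iic x, paretoPDFReal x₀ α t
        = ∫ t in Iic x, (if x₀ ≤ t then (α * x₀ ^ α) * t ^ (-(α + 1)) else 0) := rfl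
    rw [heq, hval, paretoCDF, if_pos h, pareto_div_rpow hx₀ hx0, neg_neg]
    have e1 : x₀ ^ α * x₀ ^ (-α) = 1 := by
      rw [← Real.rpow_add hx₀]; simp
    have hαne : α ≠ 0 := hα.ne'
    have hexp : (-(α + 1) + 1 : ℝ) = -α := by ring
    rw [hexp]
    have hinv : α * α⁻¹ = 1 := mul_inv_cancel₀ hαne
    field_simp
    linear_combination e1

lemma quantile_paretoCDF (hα : 0 < α) (hx₀ : 0 < x₀) {p : ℝ} (hp0 : 0 < p) (hp1 : p < 1) :
    quantile (paretoCDF α x₀) p = x₀ * (1 - p) ^ (-α⁻¹) := by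
  have h1p : 0 < 1 - p := by linarith
  set c := (1 - p) ^ (-α⁻¹) with hc
  have hc0 : 0 < c := Real.rpow_pos_of_pos h1p _
  have hcexp : -α⁻¹ < 0 := neg_lt_zero.mpr (inv_pos.mpr hα)
  have hc1 : 1 < c :=
    (Real.one_lt_rpow_iff_of_pos h1p).mpr (Or.inr ⟨by linarith, hcexp⟩)
  have hpow : c ^ (-α) = 1 - p := by
    rw [hc, ← Real.rpow_mul h1p.le, show -α⁻¹ * -α = 1 by field_simp, Real.rpow_one]
  have hset : {x : ℝ | p ≤ paretoCDF α x₀ x} = Ici (x₀ * c) := by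
    ext x
    simp only [mem_setOf_eq, mem_Ici, paretoCDF]
    by_cases hx : x₀ ≤ x
    · rw [if_pos hx]
      have hx0 : 0 < x := lt_of_lt_of_le hx₀ hx
      have hdiv : 0 < x / x₀ := div_pos hx0 hx₀
      constructor
      · intro h
        have h2 : (x / x₀) ^ (-α) ≤ c ^ (-α) := by rw [hpow]; linarith
        have h3 : c ≤ x / x₀ :=
          (Real.rpow_le_rpow_iff_of_neg hdiv hc0 (neg_lt_zero.mpr hα)).mp h2
        calc x₀ * c ≤ x₀ * (x / x₀) := by nlinarith
          _ = x := by field_simp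
      · intro h
        have h3 : c ≤ x / x₀ := (le_div_iff₀ hx₀).mpr (by linarith [mul_comm x₀ c])
        have h2 : (x / x₀) ^ (-α) ≤ c ^ (-α) :=
          (Real.rpow_le_rpow_iff_of_neg hdiv hc0 (neg_lt_zero.mpr hα)).mpr h3
        rw [hpow] at h2
        linarith
    · rw [if_neg hx]
      push_neg at hx
      constructor
      · intro h; linarith
      · intro h; nlinarith
  rw [quantile, hset, csInf_Ici]

lemma toNNReal_pdf_smul (hα : 0 < α) (hx₀ : 0 < x₀) :
    (fun t : ℝ => (Real.toNNReal (paretoPDFReal x₀ α t)) • t) =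
      fun t : ℝ => if x₀ ≤ t then α * x₀ ^ α * t ^ (-α) else 0 := by
  funext t
  rw [NNReal.smul_def, Real.coe_toNNReal _ (paretoPDFReal_nonneg hx₀.le hα.le t), smul_eq_mul,
      paretoPDFReal]
  split_ifs with h
  · have ht0 : (0:ℝ) < t := lt_of_lt_of_le hx₀ h
    rw [show (-α : ℝ) = -(α + 1) + 1 by ring, Real.rpow_add_one ht0.ne', ← mul_assoc]
  · rw [zero_mul]

lemma setIntegral_id_paretoMeasure (hα : 1 < α) (hx₀ : 0 < x₀) {x : ℝ} (hx : x₀ ≤ x) :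
    ∫ t in Iic x, t ∂(paretoMeasure x₀ α) =
      (α * x₀ / (α - 1)) * (1 - (x / x₀) ^ (1 - α)) := by
  have hα0 : 0 < α := by linarith
  have hx0 : 0 < x := lt_of_lt_of_le hx₀ hx
  have hmeas : Measurable fun t : ℝ => Real.toNNReal (paretoPDFReal x₀ α t) :=
    (measurable_paretoPDFReal x₀ α).real_toNNReal
  have hpdf : paretoPDF x₀ α
      = fun t => ((Real.toNNReal (paretoPDFReal x₀ α t) : ℝ≥0) : ℝ≥0∞) := rfl
  rw [paretoMeasure, hpdf,
    setIntegral_withDensity_eq_setIntegral_smul hmeas (fun t : ℝ => t) measurableSet_Iic]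
  have h2 : ∫ t in Iic x, (Real.toNNReal (paretoPDFReal x₀ α t)) • t
      = ∫ t in Iic x, (if x₀ ≤ t then (α * x₀ ^ α) * t ^ (-α) else 0) := by
    rw [toNNReal_pdf_smul hα0 hx₀]
  rw [h2, integral_Iic_ite_rpow hx₀ hx (α * x₀ ^ α) (-α) (by intro hcon; linarith)]
  have hαne : α - 1 ≠ 0 := by intro hcon; linarith
  have hαne' : (1:ℝ) - α ≠ 0 := by intro hcon; linarith
  rw [pareto_div_rpow hx₀ hx0, show (-α + 1 : ℝ) = 1 - α by ring,
    show (-(1 - α) : ℝ) = α - 1 by ring]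
  have e1 : x₀ ^ α * x₀ ^ (1 - α) = x₀ := by
    rw [← Real.rpow_add hx₀]; norm_num
  have e2 : x₀ ^ (α - 1) * x₀ = x₀ ^ α := by
    rw [← Real.rpow_add_one hx₀.ne']; ring_nf
  field_simp
  linear_combination (1 - α) * e1 + ((1 - α) * x ^ (1 - α)) * e2

lemma integral_id_paretoMeasure (hα : 1 < α) (hx₀ : 0 < x₀) :
    ∫ t, t ∂(paretoMeasure x₀ α) = α * x₀ / (α - 1) := by
  have hα0 : 0 < α := by linarith
  have hmeas : Measurable fun t : ℝ => Real.toNNReal (paretoPDFReal x₀ α t) :=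
    (measurable_paretoPDFReal x₀ α).real_toNNReal
  have hpdf : paretoPDF x₀ α
      = fun t => ((Real.toNNReal (paretoPDFReal x₀ α t) : ℝ≥0) : ℝ≥0∞) := rfl
  rw [paretoMeasure, hpdf, integral_withDensity_eq_integral_smul hmeas (fun t : ℝ => t)]
  have h2 : ∫ t, (Real.toNNReal (paretoPDFReal x₀ α t)) • t
      = ∫ t, (if x₀ ≤ t then (α * x₀ ^ α) * t ^ (-α) else 0) := by
    rw [toNNReal_pdf_smul hα0 hx₀]
  rw [h2, ← setIntegral_eq_integral_of_forall_compl_eq_zero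
      (s := Ici x₀) (fun t ht => if_neg (by simpa using ht)),
    integral_Ici_eq_integral_Ioi,
    setIntegral_congr_fun measurableSet_Ioi (fun t ht => if_pos (le_of_lt ht)),
    integral_const_mul, integral_Ioi_rpow_of_lt (by linarith) hx₀]
  have e1 : x₀ ^ α * x₀ ^ (-α + 1) = x₀ := by
    rw [← Real.rpow_add hx₀]; norm_num
  have hαne : α - 1 ≠ 0 := by intro hcon; linarith
  have hαne' : (-α + 1 : ℝ) ≠ 0 := by intro hcon; linarith
  field_simp
  linear_combination (1 - α) * e1

lemma map_eq_paretoMeasure {Ω : Type*} [MeasureSpace Ω]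
    [IsProbabilityMeasure (volume : Measure Ω)]
    (X : Ω → ℝ) (hX : Measurable X) (hα : 0 < α) (hx₀ : 0 < x₀)
    (hF : ∀ x, cdfOf X x = paretoCDF α x₀ x) :
    Measure.map X volume = paretoMeasure x₀ α := by
  have : IsProbabilityMeasure (Measure.map X volume) :=
    Measure.isProbabilityMeasure_map hX.aemeasurable
  refine Measure.ext_of_Iic _ _ fun a => ?_
  rw [Measure.map_apply hX measurableSet_Iic, paretoMeasure_Iic hα hx₀]
  have h1 : X ⁻¹' Iic a = {ω | X ω ≤ a} := rfl
  rw [h1, ← hF a, cdfOf, ENNReal.ofReal_toReal (measure_ne_top _ _)]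

end ParetoAux

/-- If `X ~ Pa(α, x₀)` with `α > 1`, `x₀ > 0`, then the Zenga curve is constant:
`λ(p) = 1/α` for all `p ∈ (0,1)`. -/
theorem zenga_eq_const_of_pareto {Ω : Type*} [MeasureSpace Ω]
    [IsProbabilityMeasure (volume : Measure Ω)]
    (X : Ω → ℝ) (hX : Measurable X) (hpos : ∀ ω, 0 < X ω) (hint : Integrable X)
    (α x₀ : ℝ) (hα : 1 < α) (hx₀ : 0 < x₀)
    (hF : ∀ x, cdfOf X x = paretoCDF α x₀ x) :
    ∀ p ∈ Ioo (0 : ℝ) 1, zenga X p = 1 / α := by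
  intro p hp
  obtain ⟨hp0, hp1⟩ := hp
  have hα0 : 0 < α := by linarith
  have h1p : 0 < 1 - p := by linarith
  have hmap := map_eq_paretoMeasure X hX hα0 hx₀ hF
  have hq : quantile (cdfOf X) p = x₀ * (1 - p) ^ (-α⁻¹) := by
    have hcdf : cdfOf X = paretoCDF α x₀ := funext hF
    rw [hcdf, quantile_paretoCDF hα0 hx₀ hp0 hp1]
  set q := x₀ * (1 - p) ^ (-α⁻¹) with hqdef
  have hcexp : -α⁻¹ < 0 := neg_lt_zero.mpr (inv_pos.mpr hα0)
  have hc1 : 1 < (1 - p) ^ (-α⁻¹) :=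
    (Real.one_lt_rpow_iff_of_pos h1p).mpr (Or.inr ⟨by linarith, hcexp⟩)
  have hxq : x₀ ≤ q := le_mul_of_one_le_right hx₀.le hc1.le
  have hnum : ∫ ω in {ω | X ω ≤ q}, X ω
      = (α * x₀ / (α - 1)) * (1 - (q / x₀) ^ (1 - α)) := by
    have h1 : {ω | X ω ≤ q} = X ⁻¹' Iic q := rfl
    rw [h1, ← setIntegral_map (f := fun y : ℝ => y) measurableSet_Iic
      aestronglyMeasurable_id hX.aemeasurable, hmap,
      setIntegral_id_paretoMeasure hα hx₀ hxq]
  have hden : ∫ ω, X ω = α * x₀ / (α - 1) := by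
    rw [show (∫ ω, X ω) = ∫ y, y ∂(Measure.map X volume) from
      (integral_map hX.aemeasurable aestronglyMeasurable_id).symm, hmap,
      integral_id_paretoMeasure hα hx₀]
  have hmean0 : α * x₀ / (α - 1) ≠ 0 :=
    ne_of_gt (div_pos (mul_pos hα0 hx₀) (by linarith))
  have hQ : incMoment X q = 1 - (q / x₀) ^ (1 - α) := by
    rw [incMoment, hnum, hden, mul_comm, mul_div_assoc, div_self hmean0, mul_one]
  have hqx : q / x₀ = (1 - p) ^ (-α⁻¹) := by
    rw [hqdef, mul_comm, mul_div_assoc, div_self hx₀.ne', mul_one]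
  have hpow : (q / x₀) ^ (1 - α) = (1 - p) ^ ((α - 1) / α) := by
    rw [hqx, ← Real.rpow_mul h1p.le, show -α⁻¹ * (1 - α) = (α - 1) / α by
      field_simp; ring]
  have hlog : Real.log (1 - p) ≠ 0 := ne_of_lt (Real.log_neg h1p (by linarith))
  rw [zenga, hq, hQ, hpow, sub_sub_cancel, Real.log_rpow h1p,
    mul_div_assoc, div_self hlog, mul_one]
  field_simp
  ring
end
end

section
/- Let X be a positive random variable with finite mean μ whose distribution function F is continuous and strictly increasing on its support. If the Zenga inequality curve of X is constant, λ(p) = c for all p ∈ (0,1) with 0 < c < 1, then F is the Type I Pareto distribution with shape parameter α = 1/c and scale parameter x₀ = μ(1 − c), i.e. F(x) = 1 − (x/x₀)^{−1/c} for x ≥ x₀. -/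
open MeasureTheory Real Set Filter

noncomputable section

section Aux
variable {Ω : Type*} [MeasureSpace Ω] [IsProbabilityMeasure (volume : Measure Ω)]
  {X : Ω → ℝ}

lemma cdf_mono : Monotone (cdfOf X) := fun a b hab =>
  ENNReal.toReal_mono (measure_ne_top _ _) (measure_mono (fun ω h => le_trans h hab))

lemma cdf_nonneg (x : ℝ) : 0 ≤ cdfOf X x := ENNReal.toReal_nonneg

lemma cdf_le_one (x : ℝ) : cdfOf X x ≤ 1 := by
  rw [cdfOf, ← ENNReal.toReal_one]
  exact ENNReal.toReal_mono ENNReal.one_ne_top prob_le_one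

lemma cdf_zero (hpos : ∀ ω, 0 < X ω) : cdfOf X 0 = 0 := by
  have : {ω | X ω ≤ 0} = ∅ := by
    ext ω; simp [not_le.2 (hpos ω)]
  simp [cdfOf, this]

lemma exists_cdf_ge {p : ℝ} (hp : p < 1) : ∃ M : ℝ, p ≤ cdfOf X M := by
  have hdir : Directed (· ⊆ ·) (fun n : ℕ => {ω | X ω ≤ (n : ℝ)}) := by
    apply Monotone.directed_le
    intro m n hmn ω h
    simp only [mem_setOf_eq] at h ⊢
    exact le_trans h (by exact_mod_cast hmn)
  have hU : (⋃ n : ℕ, {ω | X ω ≤ (n : ℝ)}) = univ := by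
    ext ω
    simp only [mem_iUnion, mem_setOf_eq, mem_univ, iff_true]
    exact exists_nat_ge (X ω)
  have hsup : (⨆ n : ℕ, (volume : Measure Ω) {ω | X ω ≤ (n : ℝ)}) = 1 := by
    rw [← hdir.measure_iUnion, hU, measure_univ]
  have hlt : ENNReal.ofReal p < ⨆ n : ℕ, (volume : Measure Ω) {ω | X ω ≤ (n : ℝ)} := by
    rw [hsup]; exact ENNReal.ofReal_lt_one.2 hp
  obtain ⟨n, hn⟩ := lt_iSup_iff.1 hlt
  refine ⟨n, ?_⟩
  calc p ≤ (ENNReal.ofReal p).toReal := by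
        rw [ENNReal.toReal_ofReal']; exact le_max_left _ _
    _ ≤ cdfOf X n := ENNReal.toReal_mono (measure_ne_top _ _) hn.le

lemma quantile_setOf_nonempty (hcont : Continuous (cdfOf X)) {p : ℝ} (hp : p < 1) :
    {x : ℝ | p ≤ cdfOf X x}.Nonempty := by
  obtain ⟨M, hM⟩ := exists_cdf_ge (X := X) hp
  exact ⟨M, hM⟩

lemma quantile_bddBelow (hpos : ∀ ω, 0 < X ω) {p : ℝ} (hp : 0 < p) :
    BddBelow {x : ℝ | p ≤ cdfOf X x} := by
  refine ⟨0, fun y hy => ?_⟩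
  by_contra h
  push_neg at h
  have : cdfOf X y ≤ cdfOf X 0 := cdf_mono h.le
  rw [cdf_zero hpos] at this
  exact absurd (le_trans hy this) (not_le.2 hp)

lemma cdf_quantile (hpos : ∀ ω, 0 < X ω) (hcont : Continuous (cdfOf X))
    {p : ℝ} (hp : p ∈ Ioo (0 : ℝ) 1) :
    cdfOf X (quantile (cdfOf X) p) = p := by
  set S := {x : ℝ | p ≤ cdfOf X x} with hS
  have hcl : IsClosed S := isClosed_le continuous_const hcont
  have hne : S.Nonempty := quantile_setOf_nonempty hcont hp.2
  have hbdd : BddBelow S := quantile_bddBelow hpos hp.1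
  have hmem : sInf S ∈ S := hcl.csInf_mem hne hbdd
  refine le_antisymm ?_ hmem
  by_contra h
  push_neg at h
  have hopen : IsOpen {x : ℝ | p < cdfOf X x} := isOpen_lt continuous_const hcont
  obtain ⟨ε, hε, hball⟩ := Metric.isOpen_iff.1 hopen (sInf S) h
  have hmemS : sInf S - ε / 2 ∈ S := by
    have hb : sInf S - ε / 2 ∈ Metric.ball (sInf S) ε := by
      rw [Metric.mem_ball, Real.dist_eq]
      have h2 : |sInf S - ε / 2 - sInf S| = ε / 2 := by
        rw [show sInf S - ε / 2 - sInf S = -(ε/2) by ring, abs_neg,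
          abs_of_nonneg (half_pos hε).le]
      rw [h2]
      linarith
    exact le_of_lt (show p < cdfOf X (sInf S - ε / 2) from hball hb)
  have := csInf_le hbdd hmemS
  linarith

lemma quantile_mono_aux (hpos : ∀ ω, 0 < X ω) (hcont : Continuous (cdfOf X))
    {p q : ℝ} (hp : p ∈ Ioo (0:ℝ) 1) (hq : q ∈ Ioo (0:ℝ) 1) (hpq : p ≤ q) :
    quantile (cdfOf X) p ≤ quantile (cdfOf X) q :=
  csInf_le_csInf (quantile_bddBelow hpos hp.1) (quantile_setOf_nonempty hcont hq.2)
    (fun x hx => le_trans hpq hx)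

lemma mu_pos (hpos : ∀ ω, 0 < X ω) (hint : Integrable X) : 0 < ∫ ω, X ω := by
  rw [integral_pos_iff_support_of_nonneg (fun ω => (hpos ω).le) hint]
  have : Function.support X = univ := by
    ext ω; simp [Function.mem_support, (hpos ω).ne']
  rw [this, measure_univ]
  exact zero_lt_one

lemma tail_pos (hX : Measurable X) (hpos : ∀ ω, 0 < X ω) (hint : Integrable X)
    {s : ℝ} (hs : cdfOf X s < 1) : 0 < ∫ ω in {ω | X ω ≤ s}ᶜ, X ω := by
  have hms : MeasurableSet {ω | X ω ≤ s} := hX measurableSet_Iic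
  rw [setIntegral_pos_iff_support_of_nonneg_ae
    (Eventually.of_forall (fun ω => (hpos ω).le)) hint.integrableOn]
  have hsupp : Function.support X = univ := by
    ext ω; simp [Function.mem_support, (hpos ω).ne']
  rw [hsupp, univ_inter]
  have hne : (volume : Measure Ω) {ω | X ω ≤ s} < 1 := by
    have := hs
    rw [cdfOf, ← ENNReal.toReal_one] at this
    exact (ENNReal.toReal_lt_toReal (measure_ne_top _ _) ENNReal.one_ne_top).1 this
  rw [prob_compl_eq_one_sub hms]
  exact tsub_pos_of_lt hne

end Aux

section Aux2
variable {Ω : Type*} [MeasureSpace Ω] [IsProbabilityMeasure (volume : Measure Ω)]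
  {X : Ω → ℝ}

lemma key (hX : Measurable X) (hpos : ∀ ω, 0 < X ω) (hint : Integrable X)
    (hcont : Continuous (cdfOf X)) {c : ℝ} (hc : c ∈ Ioo (0:ℝ) 1)
    (hconst : ∀ p ∈ Ioo (0 : ℝ) 1, zenga X p = c) {p : ℝ} (hp : p ∈ Ioo (0:ℝ) 1) :
    ∫ ω in {ω | X ω ≤ quantile (cdfOf X) p}, X ω
      = (∫ ω, X ω) * (1 - (1 - p) ^ (1 - c)) := by
  set s := quantile (cdfOf X) p with hs
  have hF : cdfOf X s = p := cdf_quantile hpos hcont hp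
  set A := ∫ ω in {ω | X ω ≤ s}, X ω with hA
  set T := ∫ ω in {ω | X ω ≤ s}ᶜ, X ω with hT
  set μ := ∫ ω, X ω with hμdef
  have hms : MeasurableSet {ω | X ω ≤ s} := hX measurableSet_Iic
  have hadd : A + T = μ := integral_add_compl hms hint
  have hTpos : 0 < T := tail_pos hX hpos hint (by rw [hF]; exact hp.2)
  have hμ : 0 < μ := mu_pos hpos hint
  have hp1 : (0:ℝ) < p := hp.1
  have hp2 : p < 1 := hp.2
  have hz := hconst p hp
  rw [zenga, incMoment, ← hs, ← hA, ← hμdef] at hz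
  have hlogp : Real.log (1 - p) < 0 := Real.log_neg (by linarith) (by linarith)
  have h1Q : 0 < 1 - A / μ := by
    have : 1 - A / μ = T / μ := by field_simp; linarith
    rw [this]; exact div_pos hTpos hμ
  have hlog : Real.log (1 - A / μ) = (1 - c) * Real.log (1 - p) := by
    have h2 : Real.log (1 - A / μ) / Real.log (1 - p) = 1 - c := by linarith
    rw [div_eq_iff (ne_of_lt hlogp)] at h2
    linarith [h2]
  have hrw : 1 - A / μ = (1 - p) ^ (1 - c) := by
    rw [rpow_def_of_pos (by linarith : (0:ℝ) < 1 - p), mul_comm, ← hlog, Real.exp_log h1Q]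
  have := hrw
  field_simp at this
  linarith

lemma bounds (hX : Measurable X) (hpos : ∀ ω, 0 < X ω) (hint : Integrable X)
    (hcont : Continuous (cdfOf X)) {c : ℝ} (hc : c ∈ Ioo (0:ℝ) 1)
    (hconst : ∀ p ∈ Ioo (0 : ℝ) 1, zenga X p = c)
    {p q : ℝ} (hp : p ∈ Ioo (0:ℝ) 1) (hq : q ∈ Ioo (0:ℝ) 1) (hpq : p < q) :
    quantile (cdfOf X) p * (q - p)
        ≤ (∫ ω, X ω) * (1 - (1 - q) ^ (1 - c)) - (∫ ω, X ω) * (1 - (1 - p) ^ (1 - c)) ∧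
      (∫ ω, X ω) * (1 - (1 - q) ^ (1 - c)) - (∫ ω, X ω) * (1 - (1 - p) ^ (1 - c))
        ≤ quantile (cdfOf X) q * (q - p) := by
  set sp := quantile (cdfOf X) p with hsp
  set sq := quantile (cdfOf X) q with hsq
  have hspq : sp ≤ sq := quantile_mono_aux hpos hcont hp hq hpq.le
  have hFp : cdfOf X sp = p := cdf_quantile hpos hcont hp
  have hFq : cdfOf X sq = q := cdf_quantile hpos hcont hq
  set A := {ω | X ω ≤ sp} with hAdef
  set B := {ω | X ω ≤ sq} with hBdef
  have hAB : A ⊆ B := fun ω h => le_trans h hspq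
  have hmA : MeasurableSet A := hX measurableSet_Iic
  have hmB : MeasurableSet B := hX measurableSet_Iic
  have hmD : MeasurableSet (B \ A) := hmB.diff hmA
  have hmeas : ((volume : Measure Ω) (B \ A)).toReal = q - p := by
    rw [measure_diff hAB hmA.nullMeasurableSet (measure_ne_top _ _),
      ENNReal.toReal_sub_of_le (measure_mono hAB) (measure_ne_top _ _)]
    show cdfOf X sq - cdfOf X sp = q - p
    rw [hFp, hFq]
  have hID : ∫ ω in B \ A, X ω = (∫ ω, X ω) * (1 - (1 - q) ^ (1 - c))
      - (∫ ω, X ω) * (1 - (1 - p) ^ (1 - c)) := by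
    rw [integral_diff hmA hint.integrableOn hAB]
    rw [show (∫ ω in B, X ω) = (∫ ω, X ω) * (1 - (1 - q) ^ (1 - c)) from
      key hX hpos hint hcont hc hconst hq,
      show (∫ ω in A, X ω) = (∫ ω, X ω) * (1 - (1 - p) ^ (1 - c)) from
      key hX hpos hint hcont hc hconst hp]
  constructor
  · rw [← hID, ← hmeas]
    refine setIntegral_ge_of_const_le_real hmD (measure_ne_top _ _) (fun ω hω => ?_)
      hint.integrableOn
    exact le_of_not_ge (fun h => hω.2 h)
  · rw [← hID, ← hmeas]
    refine le_trans (le_abs_self _) ?_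
    have := norm_setIntegral_le_of_norm_le_const (μ := (volume : Measure Ω))
      (measure_lt_top _ (B \ A)) (C := sq) (f := X) (fun ω hω => ?_)
    · simpa [Real.norm_eq_abs, mul_comm, Measure.real] using this
    · rw [Real.norm_eq_abs, abs_of_pos (hpos ω)]
      exact hω.1

lemma quantile_eq (hX : Measurable X) (hpos : ∀ ω, 0 < X ω) (hint : Integrable X)
    (hcont : Continuous (cdfOf X)) {c : ℝ} (hc : c ∈ Ioo (0:ℝ) 1)
    (hconst : ∀ p ∈ Ioo (0 : ℝ) 1, zenga X p = c) {p : ℝ} (hp : p ∈ Ioo (0:ℝ) 1) :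
    quantile (cdfOf X) p = (∫ ω, X ω) * (1 - c) * (1 - p) ^ (-c) := by
  set μ := ∫ ω, X ω with hμdef
  set φ : ℝ → ℝ := fun r => μ * (1 - (1 - r) ^ (1 - c)) with hφ
  set d := μ * (1 - c) * (1 - p) ^ (-c) with hd
  have hφd : HasDerivAt φ d p := by
    have h1 : HasDerivAt (fun r : ℝ => 1 - r) (-1) p := (hasDerivAt_id p).const_sub 1
    have h2 : HasDerivAt (fun y : ℝ => y ^ (1 - c)) ((1 - c) * (1 - p) ^ (1 - c - 1)) (1 - p) :=
      Real.hasDerivAt_rpow_const (Or.inl (by linarith [hp.2] : (1:ℝ) - p ≠ 0))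
    have h3 := h2.comp p h1
    have h4 := (h3.const_sub 1).const_mul μ
    refine h4.congr_deriv ?_
    rw [hd, show (1:ℝ) - c - 1 = -c by ring]
    ring
  have htend := hasDerivAt_iff_tendsto_slope.mp hφd
  set sp := quantile (cdfOf X) p with hsp
  have hub : sp ≤ d := by
    refine ge_of_tendsto (htend.mono_left
      (nhdsWithin_mono p (show Ioi p ⊆ {p}ᶜ from fun x hx => Set.mem_compl_singleton_iff.mpr (ne_of_gt hx)))) ?_
    · filter_upwards [Ioo_mem_nhdsGT_of_mem ⟨le_refl p, hp.2⟩] with q hq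
      have hq' : q ∈ Ioo (0:ℝ) 1 := ⟨lt_trans hp.1 hq.1, hq.2⟩
      rw [slope_def_field, le_div_iff₀ (by linarith [hq.1] : (0:ℝ) < q - p)]
      exact (bounds hX hpos hint hcont hc hconst hp hq' hq.1).1
  have hlb : d ≤ sp := by
    refine le_of_tendsto (htend.mono_left
      (nhdsWithin_mono p (show Iio p ⊆ {p}ᶜ from fun x hx => Set.mem_compl_singleton_iff.mpr (ne_of_lt hx)))) ?_
    · filter_upwards [Ioo_mem_nhdsLT_of_mem ⟨hp.1, le_refl p⟩] with q hq
      have hq' : q ∈ Ioo (0:ℝ) 1 := ⟨hq.1, lt_trans hq.2 hp.2⟩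
      have hb := (bounds hX hpos hint hcont hc hconst hq' hp hq.2).2
      rw [slope_def_field, div_le_iff_of_neg (by linarith [hq.2] : q - p < 0)]
      rw [← hμdef, ← hsp] at hb
      show sp * (q - p) ≤ μ * (1 - (1 - q) ^ (1 - c)) - μ * (1 - (1 - p) ^ (1 - c))
      have hr : sp * (q - p) = -(sp * (p - q)) := by ring
      linarith
  exact le_antisymm hub hlb

end Aux2

/-- If the Zenga curve of a positive r.v. `X` (with continuous CDF, strictly
increasing on its support) is constant equal to `c ∈ (0,1)`, then `X` is
Pareto with shape `1/c` and scale `μ(1-c)`. -/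
theorem pareto_of_zenga_const {Ω : Type*} [MeasureSpace Ω]
    [IsProbabilityMeasure (volume : Measure Ω)]
    (X : Ω → ℝ) (hX : Measurable X) (hpos : ∀ ω, 0 < X ω) (hint : Integrable X)
    (hcont : Continuous (cdfOf X))
    (hmono : StrictMonoOn (cdfOf X) {x | 0 < cdfOf X x ∧ cdfOf X x < 1})
    (c : ℝ) (hc : c ∈ Ioo (0 : ℝ) 1)
    (hconst : ∀ p ∈ Ioo (0 : ℝ) 1, zenga X p = c) :
    ∀ x, (∫ ω, X ω) * (1 - c) ≤ x →
      cdfOf X x = 1 - (x / ((∫ ω, X ω) * (1 - c))) ^ (-(1 / c)) := by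
  intro x hx
  set μ := ∫ ω, X ω with hμdef
  have hμ : 0 < μ := mu_pos hpos hint
  have hc1 : (0:ℝ) < 1 - c := by have := hc.2; linarith
  set x₀ := μ * (1 - c) with hx₀
  have hx₀pos : 0 < x₀ := mul_pos hμ hc1
  rcases eq_or_lt_of_le hx with heq | hlt
  · rw [← heq, div_self hx₀pos.ne', Real.one_rpow]
    have h0 : cdfOf X x₀ ≤ 0 := by
      by_contra h
      push_neg at h
      set p := min (cdfOf X x₀) 1 / 2 with hpdef
      have hmin0 : 0 < min (cdfOf X x₀) 1 := lt_min h zero_lt_one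
      have hmin1 : min (cdfOf X x₀) 1 ≤ 1 := min_le_right _ _
      have hp : p ∈ Ioo (0:ℝ) 1 := ⟨by rw [hpdef]; linarith, by rw [hpdef]; linarith⟩
      have hple : cdfOf X x₀ ≤ p := by
        calc cdfOf X x₀ ≤ cdfOf X (quantile (cdfOf X) p) := by
              apply cdf_mono
              rw [quantile_eq hX hpos hint hcont hc hconst hp, ← hμdef, ← hx₀]
              nth_rewrite 1 [← mul_one x₀]
              refine mul_le_mul_of_nonneg_left ?_ hx₀pos.le
              exact Real.one_le_rpow_of_pos_of_le_one_of_nonpos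
                (by linarith [hp.2]) (by linarith [hp.1]) (by linarith [hc.1])
          _ = p := cdf_quantile hpos hcont hp
      have hlt2 : p < cdfOf X x₀ := by
        have hle : min (cdfOf X x₀) 1 ≤ cdfOf X x₀ := min_le_left _ _
        rw [hpdef]; linarith
      linarith
    have h1 : cdfOf X x₀ = 0 := le_antisymm h0 (cdf_nonneg (X := X) x₀)
    rw [h1]; norm_num
  · set r := (x / x₀) ^ (-(1 / c)) with hr
    have hxq : 1 < x / x₀ := (one_lt_div hx₀pos).2 hlt
    have hrpos : 0 < r := Real.rpow_pos_of_pos (by linarith) _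
    have hrlt : r < 1 := Real.rpow_lt_one_of_one_lt_of_neg hxq
      (by have := one_div_pos.mpr hc.1; linarith)
    set p := 1 - r with hpdef
    have hpI : p ∈ Ioo (0:ℝ) 1 := ⟨by rw [hpdef]; linarith, by rw [hpdef]; linarith⟩
    have hq : quantile (cdfOf X) p = x := by
      rw [quantile_eq hX hpos hint hcont hc hconst hpI, ← hμdef, ← hx₀]
      have h1p : (1:ℝ) - p = r := by rw [hpdef]; ring
      rw [h1p, hr, ← Real.rpow_mul (by positivity : (0:ℝ) ≤ x / x₀)]
      rw [show (-(1/c)) * (-c) = 1 by rw [neg_mul_neg, one_div, inv_mul_cancel₀ hc.1.ne'], Real.rpow_one, mul_comm,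
        div_mul_cancel₀ x hx₀pos.ne']
    calc cdfOf X x = cdfOf X (quantile (cdfOf X) p) := by rw [hq]
      _ = p := cdf_quantile hpos hcont hpI
      _ = 1 - (x / x₀) ^ (-(1 / c)) := by rw [hpdef, hr]
end
end

section
/- Let X₁, X₂, … be i.i.d. positive random variables with E[X₁] = μ < ∞, distribution function F, and first incomplete moment Q(x) = (1/μ) ∫₀ˣ t dF(t). Define the empirical first incomplete moment Q_n(x) = (Σ_{i=1}^n X_i 1{X_i ≤ x}) / (Σ_{i=1}^n X_i). Then, almost surely, sup_{0 < x < ∞} |Q_n(x) − Q(x)| → 0 as n → ∞. -/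
open MeasureTheory Real Set Filter

noncomputable section

/-- Empirical first incomplete moment
`Q_n(x) = (Σ_{i<n} X_i 1{X_i ≤ x}) / (Σ_{i<n} X_i)`. -/
def empIncMoment {Ω : Type*} (X : ℕ → Ω → ℝ) (n : ℕ) (ω : Ω) (x : ℝ) : ℝ :=
  (∑ i ∈ Finset.range n, if X i ω ≤ x then X i ω else 0) /
    (∑ i ∈ Finset.range n, X i ω)

open scoped Topology

section AuxiliaryLemmas



/-- The deterministic Pólya / Glivenko–Cantelli grid argument. -/
lemma gc_core (Q Q' R R' : ℝ → ℝ) (k : ℕ) (hk : 2 ≤ k) (xg : ℕ → ℝ)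
    (hQm : Monotone Q) (hQ0 : ∀ x, 0 ≤ Q x) (hQ1 : ∀ x, Q x ≤ 1)
    (hQQ' : ∀ y x : ℝ, y < x → Q y ≤ Q' x)
    (hRm : Monotone R) (hR0 : ∀ x, 0 ≤ R x) (hR1 : ∀ x, R x ≤ 1)
    (hRR' : ∀ y x : ℝ, y < x → R y ≤ R' x)
    (hg1 : ∀ j : ℕ, 1 ≤ j → j ≤ k - 1 → (j : ℝ)/(k : ℝ) ≤ Q (xg j))
    (hg2 : ∀ j : ℕ, ∀ x : ℝ, 1 ≤ j → j ≤ k - 1 → x < xg j → Q x < (j : ℝ)/(k : ℝ))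
    (hg3 : ∀ j : ℕ, 1 ≤ j → j ≤ k - 1 → Q' (xg j) ≤ (j : ℝ)/(k : ℝ))
    (hc : ∀ j : ℕ, 1 ≤ j → j ≤ k - 1 →
      |R (xg j) - Q (xg j)| ≤ 1/(k : ℝ) ∧ |R' (xg j) - Q' (xg j)| ≤ 1/(k : ℝ)) :
    ∀ x : ℝ, |R x - Q x| ≤ 2/(k : ℝ) := by
  intro x
  have hk0 : (0:ℝ) < (k : ℝ) := by
    have : (2:ℝ) ≤ (k:ℝ) := by exact_mod_cast hk
    linarith
  have e2 : (2:ℝ)/(k:ℝ) = 1/(k:ℝ) + 1/(k:ℝ) := by ring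
  have h1k : (0:ℝ) ≤ 1/(k:ℝ) := by positivity
  set J := (Finset.Icc 1 (k-1)).filter (fun j => xg j ≤ x) with hJ
  rcases J.eq_empty_or_nonempty with hJe | hJne
  · -- x is to the left of the first grid point
    have h1mem : 1 ∈ Finset.Icc 1 (k-1) := Finset.mem_Icc.2 ⟨le_rfl, by omega⟩
    have hx1 : x < xg 1 := by
      by_contra h
      push_neg at h
      have : (1:ℕ) ∈ J := Finset.mem_filter.2 ⟨h1mem, h⟩
      rw [hJe] at this
      exact absurd this (Finset.notMem_empty _)
    have hQx : Q x < 1/(k:ℝ) := by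
      have := hg2 1 x le_rfl (by omega) hx1
      simpa using this
    have hRx : R x ≤ 2/(k:ℝ) := by
      have h1 := hRR' x (xg 1) hx1
      have h2 := (abs_le.1 (hc 1 le_rfl (by omega)).2).2
      have h3 := hg3 1 le_rfl (by omega)
      simp only [Nat.cast_one] at h3
      linarith
    rw [abs_le]
    constructor <;> linarith [hR0 x, hQ0 x]
  · set j := J.max' hJne with hjdef
    have hjJ : j ∈ J := J.max'_mem hJne
    obtain ⟨hjIcc, hjx⟩ := Finset.mem_filter.1 hjJ
    obtain ⟨hj1, hjk⟩ := Finset.mem_Icc.1 hjIcc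
    have e1 : ((j:ℝ)+1)/(k:ℝ) = (j:ℝ)/(k:ℝ) + 1/(k:ℝ) := by ring
    -- lower bounds
    have hQl : (j:ℝ)/(k:ℝ) ≤ Q x := le_trans (hg1 j hj1 hjk) (hQm hjx)
    have hRl : (j:ℝ)/(k:ℝ) - 1/(k:ℝ) ≤ R x := by
      have h1 := (abs_le.1 (hc j hj1 hjk).1).1
      have h2 := hg1 j hj1 hjk
      have h3 := hRm hjx
      linarith
    -- upper bounds
    have hub : Q x ≤ ((j:ℝ)+1)/(k:ℝ) ∧ R x ≤ ((j:ℝ)+1)/(k:ℝ) + 1/(k:ℝ) := by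
      rcases eq_or_lt_of_le hjk with hje | hjlt
      · have hjk1 : ((j:ℝ)+1) = (k:ℝ) := by
          have : j + 1 = k := by omega
          exact_mod_cast congrArg (Nat.cast : ℕ → ℝ) this
        have hone : ((j:ℝ)+1)/(k:ℝ) = 1 := by rw [hjk1]; field_simp
        rw [hone]
        exact ⟨hQ1 x, by linarith [hR1 x]⟩
      · have hj1k : j + 1 ≤ k - 1 := by omega
        have hmem : j+1 ∈ Finset.Icc 1 (k-1) := Finset.mem_Icc.2 ⟨by omega, hj1k⟩
        have hnot : x < xg (j+1) := by
          by_contra h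
          push_neg at h
          have hmemJ : j+1 ∈ J := Finset.mem_filter.2 ⟨hmem, h⟩
          have := J.le_max' _ hmemJ
          omega
        have hQ'b := hg3 (j+1) (by omega) hj1k
        have h2' := (abs_le.1 (hc (j+1) (by omega) hj1k).2).2
        push_cast at hQ'b
        constructor
        · exact le_trans (hQQ' x _ hnot) hQ'b
        · have := hRR' x _ hnot
          linarith
    rw [abs_le]
    exact ⟨by linarith [hub.1], by linarith [hub.2]⟩



variable {Ω : Type*} [MeasureSpace Ω] [IsProbabilityMeasure (volume : Measure Ω)]

lemma cut_integrable (Y : Ω → ℝ) (hm : Measurable Y) (hint : Integrable Y)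
    (g : Ω → ℝ) (hg : Measurable g) (hb : ∀ ω, |g ω| ≤ |Y ω|) : Integrable g :=
  hint.mono hg.aestronglyMeasurable (ae_of_all _ fun ω => by
    simpa [Real.norm_eq_abs] using hb ω)

lemma m_tendsto_right (Y : Ω → ℝ) (hm : Measurable Y) (hint : Integrable Y) (a : ℝ) :
    Tendsto (fun n : ℕ => ∫ ω, if Y ω ≤ a + 1/(n+1) then Y ω else 0) atTop
      (𝓝 (∫ ω, if Y ω ≤ a then Y ω else 0)) := by
  apply tendsto_integral_of_dominated_convergence (fun ω => |Y ω|)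
  · intro n
    exact ((Measurable.ite (measurableSet_le hm measurable_const) hm
      measurable_const)).aestronglyMeasurable
  · exact hint.abs
  · intro n
    refine ae_of_all _ fun ω => ?_
    rw [Real.norm_eq_abs]
    split_ifs <;> simp [abs_nonneg]
  · refine ae_of_all _ fun ω => ?_
    by_cases h : Y ω ≤ a
    · have : ∀ n : ℕ, (if Y ω ≤ a + 1/(n+1) then Y ω else 0) = Y ω := by
        intro n
        rw [if_pos]
        have : (0:ℝ) < 1/(n+1) := by positivity
        linarith
      simp only [this, if_pos h]
      exact tendsto_const_nhds
    · push_neg at h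
      rw [if_neg (not_le.2 h)]
      have hev : ∀ᶠ n : ℕ in atTop, (1:ℝ)/(n+1) < Y ω - a :=
        tendsto_one_div_add_atTop_nhds_zero_nat.eventually
          (eventually_lt_nhds (by linarith))
      refine Tendsto.congr' ?_ tendsto_const_nhds
      filter_upwards [hev] with n hn
      rw [if_neg (by push_neg; linarith)]

lemma m_tendsto_left (Y : Ω → ℝ) (hm : Measurable Y) (hint : Integrable Y) (a : ℝ) :
    Tendsto (fun n : ℕ => ∫ ω, if Y ω ≤ a - 1/(n+1) then Y ω else 0) atTop
      (𝓝 (∫ ω, if Y ω < a then Y ω else 0)) := by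
  apply tendsto_integral_of_dominated_convergence (fun ω => |Y ω|)
  · intro n
    exact ((Measurable.ite (measurableSet_le hm measurable_const) hm
      measurable_const)).aestronglyMeasurable
  · exact hint.abs
  · intro n
    refine ae_of_all _ fun ω => ?_
    rw [Real.norm_eq_abs]
    split_ifs <;> simp [abs_nonneg]
  · refine ae_of_all _ fun ω => ?_
    by_cases h : Y ω < a
    · rw [if_pos h]
      have hev : ∀ᶠ n : ℕ in atTop, (1:ℝ)/(n+1) < a - Y ω :=
        tendsto_one_div_add_atTop_nhds_zero_nat.eventually
          (eventually_lt_nhds (by linarith))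
      refine Tendsto.congr' ?_ tendsto_const_nhds
      filter_upwards [hev] with n hn
      rw [if_pos (by linarith)]
    · push_neg at h
      have : ∀ n : ℕ, (if Y ω ≤ a - 1/(n+1) then Y ω else 0) = 0 := by
        intro n
        rw [if_neg]
        push_neg
        have : (0:ℝ) < 1/(n+1) := by positivity
        linarith
      simp only [this, if_neg (not_lt.2 h)]
      exact tendsto_const_nhds

lemma m_tendsto_top (Y : Ω → ℝ) (hm : Measurable Y) (hint : Integrable Y) :
    Tendsto (fun n : ℕ => ∫ ω, if Y ω ≤ (n : ℝ) then Y ω else 0) atTop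
      (𝓝 (∫ ω, Y ω)) := by
  apply tendsto_integral_of_dominated_convergence (fun ω => |Y ω|)
  · intro n
    exact ((Measurable.ite (measurableSet_le hm measurable_const) hm
      measurable_const)).aestronglyMeasurable
  · exact hint.abs
  · intro n
    refine ae_of_all _ fun ω => ?_
    rw [Real.norm_eq_abs]
    split_ifs <;> simp [abs_nonneg]
  · refine ae_of_all _ fun ω => ?_
    obtain ⟨N, hN⟩ := exists_nat_ge (Y ω)
    refine Tendsto.congr' ?_ tendsto_const_nhds
    filter_upwards [eventually_ge_atTop N] with n hn
    rw [if_pos (le_trans hN (by exact_mod_cast hn))]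

lemma slln_aux (X : ℕ → Ω → ℝ) (hmeas : ∀ i, Measurable (X i))
    (hindep : ProbabilityTheory.iIndepFun X volume)
    (hident : ∀ i, ProbabilityTheory.IdentDistrib (X i) (X 0) volume volume)
    (hint : Integrable (X 0)) (f : ℝ → ℝ) (hf : Measurable f) (hb : ∀ t, |f t| ≤ |t|) :
    ∀ᵐ ω ∂(volume : Measure Ω),
      Tendsto (fun n => (∑ i ∈ Finset.range n, f (X i ω)) / (n : ℝ))
        atTop (𝓝 (∫ ω, f (X 0 ω))) := by
  have h := ProbabilityTheory.strong_law_ae_real (fun i => f ∘ X i)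
    (cut_integrable (X 0) (hmeas 0) hint _ (hf.comp (hmeas 0)) (fun ω => hb _))
    (fun i j hij => (hindep.indepFun hij).comp hf hf)
    (fun i => (hident i).comp hf)
  simpa [Function.comp] using h



section mfunlems

variable {Ω : Type*} [MeasureSpace Ω]

/-- Truncated first moment `m(x) = E[Y 1{Y ≤ x}]`. -/
def mfun (Y : Ω → ℝ) (x : ℝ) : ℝ := ∫ ω, if Y ω ≤ x then Y ω else 0

/-- Strictly truncated first moment `m⁻(x) = E[Y 1{Y < x}]`. -/
def mfun' (Y : Ω → ℝ) (x : ℝ) : ℝ := ∫ ω, if Y ω < x then Y ω else 0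

lemma cut_integrable' (Y : Ω → ℝ) (hint : Integrable Y)
    (g : Ω → ℝ) (hg : Measurable g) (hb : ∀ ω, |g ω| ≤ |Y ω|) : Integrable g :=
  hint.mono hg.aestronglyMeasurable (ae_of_all _ fun ω => by
    simpa [Real.norm_eq_abs] using hb ω)

lemma mfun_int (Y : Ω → ℝ) (hm : Measurable Y) (hint : Integrable Y) (x : ℝ) :
    Integrable (fun ω => if Y ω ≤ x then Y ω else 0) :=
  cut_integrable' Y hint _
    (Measurable.ite (measurableSet_le hm measurable_const) hm measurable_const)
    (fun ω => by split_ifs <;> simp [abs_nonneg])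

lemma mfun'_int (Y : Ω → ℝ) (hm : Measurable Y) (hint : Integrable Y) (x : ℝ) :
    Integrable (fun ω => if Y ω < x then Y ω else 0) :=
  cut_integrable' Y hint _
    (Measurable.ite (measurableSet_lt hm measurable_const) hm measurable_const)
    (fun ω => by split_ifs <;> simp [abs_nonneg])

lemma mfun_mono (Y : Ω → ℝ) (hm : Measurable Y) (hint : Integrable Y)
    (hp : ∀ ω, 0 < Y ω) : Monotone (mfun Y) := by
  intro a b hab
  apply integral_mono (mfun_int Y hm hint a) (mfun_int Y hm hint b)
  intro ω
  dsimp only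
  by_cases h : Y ω ≤ a
  · rw [if_pos h, if_pos (h.trans hab)]
  · rw [if_neg h]
    split_ifs
    · exact (hp ω).le
    · exact le_rfl

lemma mfun_nonneg (Y : Ω → ℝ) (hp : ∀ ω, 0 < Y ω) (x : ℝ) : 0 ≤ mfun Y x := by
  apply integral_nonneg
  intro ω
  dsimp only
  split_ifs
  · exact (hp ω).le
  · exact le_rfl

lemma mfun_le (Y : Ω → ℝ) (hm : Measurable Y) (hint : Integrable Y)
    (hp : ∀ ω, 0 < Y ω) (x : ℝ) : mfun Y x ≤ ∫ ω, Y ω := by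
  apply integral_mono (mfun_int Y hm hint x) hint
  intro ω
  dsimp only
  split_ifs
  · exact le_rfl
  · exact (hp ω).le

lemma mfun_le_mfun' (Y : Ω → ℝ) (hm : Measurable Y) (hint : Integrable Y)
    (hp : ∀ ω, 0 < Y ω) {y x : ℝ} (hyx : y < x) : mfun Y y ≤ mfun' Y x := by
  apply integral_mono (mfun_int Y hm hint y) (mfun'_int Y hm hint x)
  intro ω
  dsimp only
  by_cases h : Y ω ≤ y
  · rw [if_pos h, if_pos (lt_of_le_of_lt h hyx)]
  · rw [if_neg h]
    split_ifs
    · exact (hp ω).le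
    · exact le_rfl

lemma mfun_zero (Y : Ω → ℝ) (hp : ∀ ω, 0 < Y ω) {x : ℝ} (hx : x ≤ 0) : mfun Y x = 0 := by
  have h0 : (fun ω => if Y ω ≤ x then Y ω else 0) = fun _ => (0:ℝ) := by
    funext ω
    rw [if_neg]
    push_neg
    exact lt_of_le_of_lt hx (hp ω)
  rw [mfun, h0, integral_zero]

end mfunlems

end AuxiliaryLemmas

open scoped Topology

/-- Uniform strong consistency of the empirical first incomplete moment:
almost surely, `sup_{0<x<∞} |Q_n(x) - Q(x)| → 0`. -/
theorem empIncMoment_unif_consistent {Ω : Type*} [MeasureSpace Ω]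
    [IsProbabilityMeasure (volume : Measure Ω)]
    (X : ℕ → Ω → ℝ) (hmeas : ∀ i, Measurable (X i))
    (hindep : ProbabilityTheory.iIndepFun X volume)
    (hident : ∀ i, ProbabilityTheory.IdentDistrib (X i) (X 0) volume volume)
    (hpos : ∀ i ω, 0 < X i ω) (hint : Integrable (X 0)) :
    ∀ᵐ ω ∂(volume : Measure Ω),
      Tendsto (fun n => ⨆ x : {x : ℝ // 0 < x},
        |empIncMoment X n ω x - incMoment (X 0) x|) atTop (nhds 0) := by
  classical
  haveI : Nonempty {x : ℝ // 0 < x} := ⟨⟨1, one_pos⟩⟩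
  have hYm : Measurable (X 0) := hmeas 0
  have hp0 : ∀ ω, 0 < X 0 ω := hpos 0
  set μ : ℝ := ∫ ω, X 0 ω with hμdef
  have hμpos : 0 < μ := by
    rw [hμdef, integral_pos_iff_support_of_nonneg (fun ω => (hp0 ω).le) hint]
    have hsupp : Function.support (X 0) = Set.univ := by
      ext ω
      simp [Function.mem_support, (hp0 ω).ne']
    rw [hsupp]
    simp
  -- incMoment in terms of mfun
  have heqQ : ∀ x : ℝ, incMoment (X 0) x = mfun (X 0) x / μ := by
    intro x
    have hnum : (∫ ω in {ω | X 0 ω ≤ x}, X 0 ω) = mfun (X 0) x := by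
      rw [← integral_indicator (measurableSet_le hYm measurable_const)]
      simp only [mfun]
      congr 1
    rw [incMoment, hnum, ← hμdef]
  -- the quantile-type grid function
  set xr : ℝ → ℝ := fun r => sInf {x : ℝ | r ≤ mfun (X 0) x / μ} with hxrdef
  have hS_lb : ∀ r : ℝ, 0 < r → ∀ x ∈ {x : ℝ | r ≤ mfun (X 0) x / μ}, (0:ℝ) ≤ x := by
    intro r hr x hx
    by_contra h
    push_neg at h
    rw [Set.mem_setOf_eq, mfun_zero (X 0) hp0 h.le, zero_div] at hx
    linarith
  have hS_bdd : ∀ r : ℝ, 0 < r → BddBelow {x : ℝ | r ≤ mfun (X 0) x / μ} :=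
    fun r hr => ⟨0, hS_lb r hr⟩
  have hS_ne : ∀ r : ℝ, r < 1 → {x : ℝ | r ≤ mfun (X 0) x / μ}.Nonempty := by
    intro r hr
    have htop : Tendsto (fun n : ℕ => mfun (X 0) (n:ℝ)) atTop (𝓝 μ) := by
      simpa [mfun, ← hμdef] using m_tendsto_top (X 0) hYm hint
    have hev := htop.eventually (eventually_gt_nhds (show r * μ < μ by nlinarith))
    obtain ⟨n, hn⟩ := hev.exists
    exact ⟨n, by rw [Set.mem_setOf_eq, le_div_iff₀ hμpos]; linarith⟩
  have hg1R : ∀ r : ℝ, 0 < r → r < 1 → r ≤ mfun (X 0) (xr r) / μ := by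
    intro r hr0 hr1
    rw [le_div_iff₀ hμpos]
    have hlim : Tendsto (fun n : ℕ => mfun (X 0) (xr r + 1/(n+1))) atTop
        (𝓝 (mfun (X 0) (xr r))) := by
      simpa [mfun] using m_tendsto_right (X 0) hYm hint (xr r)
    refine ge_of_tendsto hlim (Eventually.of_forall fun n => ?_)
    obtain ⟨s, hsS, hs⟩ := exists_lt_of_csInf_lt (hS_ne r hr1)
      (lt_add_of_pos_right (xr r) (by positivity : (0:ℝ) < 1/(n+1)))
    rw [Set.mem_setOf_eq, le_div_iff₀ hμpos] at hsS
    have hmono := mfun_mono (X 0) hYm hint hp0 hs.le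
    linarith
  have hg2R : ∀ (r x : ℝ), 0 < r → x < xr r → mfun (X 0) x / μ < r := by
    intro r x hr hx
    by_contra h
    push_neg at h
    have hmem : x ∈ {x : ℝ | r ≤ mfun (X 0) x / μ} := h
    have := csInf_le (hS_bdd r hr) hmem
    exact absurd hx (not_lt.2 this)
  have hg3R : ∀ r : ℝ, 0 < r → r < 1 → mfun' (X 0) (xr r) / μ ≤ r := by
    intro r hr0 hr1
    rw [div_le_iff₀ hμpos]
    have hlim : Tendsto (fun n : ℕ => mfun (X 0) (xr r - 1/(n+1))) atTop
        (𝓝 (mfun' (X 0) (xr r))) := by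
      simpa [mfun, mfun'] using m_tendsto_left (X 0) hYm hint (xr r)
    refine le_of_tendsto hlim (Eventually.of_forall fun n => ?_)
    have hlt := hg2R r (xr r - 1/(n+1)) hr0
      (sub_lt_self _ (by positivity : (0:ℝ) < 1/(n+1)))
    rw [div_lt_iff₀ hμpos] at hlt
    exact hlt.le
  -- almost sure events
  have hA : ∀ᵐ ω ∂(volume : Measure Ω),
      Tendsto (fun n => (∑ i ∈ Finset.range n, X i ω) / (n:ℝ)) atTop (𝓝 μ) := by
    have h := slln_aux X hmeas hindep hident hint (fun t => t) measurable_id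
      (fun t => le_rfl)
    simpa [← hμdef] using h
  have hB : ∀ᵐ ω ∂(volume : Measure Ω), ∀ q : ℚ,
      (Tendsto (fun n => (∑ i ∈ Finset.range n,
          if X i ω ≤ xr (q:ℝ) then X i ω else 0) / (n:ℝ))
        atTop (𝓝 (mfun (X 0) (xr (q:ℝ)))) ∧
       Tendsto (fun n => (∑ i ∈ Finset.range n,
          if X i ω < xr (q:ℝ) then X i ω else 0) / (n:ℝ))
        atTop (𝓝 (mfun' (X 0) (xr (q:ℝ))))) := by
    rw [ae_all_iff]
    intro q
    have h1 := slln_aux X hmeas hindep hident hint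
      (fun t => if t ≤ xr (q:ℝ) then t else 0)
      (Measurable.ite (measurableSet_le measurable_id measurable_const)
        measurable_id measurable_const)
      (fun t => by split_ifs <;> simp [abs_nonneg])
    have h2 := slln_aux X hmeas hindep hident hint
      (fun t => if t < xr (q:ℝ) then t else 0)
      (Measurable.ite (measurableSet_lt measurable_id measurable_const)
        measurable_id measurable_const)
      (fun t => by split_ifs <;> simp [abs_nonneg])
    filter_upwards [h1, h2] with ω hω1 hω2
    exact ⟨by simpa [mfun] using hω1, by simpa [mfun'] using hω2⟩
  filter_upwards [hA, hB] with ω hωA hωB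
  rw [NormedAddCommGroup.tendsto_nhds_zero]
  intro ε hε
  obtain ⟨K, hK⟩ := exists_nat_gt (2/ε)
  set k := max K 2 with hkdef
  have hk2 : 2 ≤ k := le_max_right _ _
  have hkR : (2:ℝ) ≤ (k:ℝ) := by exact_mod_cast hk2
  have hkpos : (0:ℝ) < (k:ℝ) := by linarith
  have hkε : 2/(k:ℝ) < ε := by
    have hKk : (K:ℝ) ≤ (k:ℝ) := by exact_mod_cast le_max_left K 2
    rw [div_lt_iff₀ hkpos]
    have h2 : 2/ε < (k:ℝ) := lt_of_lt_of_le hK hKk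
    rw [div_lt_iff₀ hε] at h2
    linarith
  set xg : ℕ → ℝ := fun j => xr ((j:ℝ)/(k:ℝ)) with hxgdef
  -- eventual closeness at grid points
  have hEv : ∀ᶠ n in atTop, ∀ j ∈ Finset.Icc 1 (k-1),
      |empIncMoment X n ω (xg j) - mfun (X 0) (xg j) / μ| ≤ 1/(k:ℝ) ∧
      |(∑ i ∈ Finset.range n, if X i ω < xg j then X i ω else 0) /
          (∑ i ∈ Finset.range n, X i ω) - mfun' (X 0) (xg j) / μ| ≤ 1/(k:ℝ) := by
    rw [eventually_all_finset]
    intro j hj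
    have hq : ((((j:ℚ)/(k:ℚ)):ℚ):ℝ) = (j:ℝ)/(k:ℝ) := by push_cast; ring
    have hB1 := (hωB ((j:ℚ)/(k:ℚ))).1
    have hB2 := (hωB ((j:ℚ)/(k:ℚ))).2
    rw [hq] at hB1 hB2
    have hco : ∀ (T : ℕ → ℝ) (L : ℝ), Tendsto (fun n => T n / (n:ℝ)) atTop (𝓝 L) →
        Tendsto (fun n => T n / (∑ i ∈ Finset.range n, X i ω)) atTop (𝓝 (L/μ)) := by
      intro T L hT
      have hdiv := hT.div hωA hμpos.ne'
      refine Tendsto.congr' ?_ hdiv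
      filter_upwards [eventually_ge_atTop 1] with n hn
      have hn0 : ((n:ℝ)) ≠ 0 := Nat.cast_ne_zero.2 (by omega)
      exact div_div_div_cancel_right₀ hn0 _ _
    have h1 := hco _ _ hB1
    have h2 := hco _ _ hB2
    have h1' := h1.eventually (Metric.closedBall_mem_nhds _
      (by positivity : (0:ℝ) < 1/(k:ℝ)))
    have h2' := h2.eventually (Metric.closedBall_mem_nhds _
      (by positivity : (0:ℝ) < 1/(k:ℝ)))
    filter_upwards [h1', h2'] with n hn1 hn2
    rw [Real.dist_eq] at hn1 hn2
    exact ⟨by simpa [empIncMoment] using hn1, hn2⟩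
  filter_upwards [hEv, eventually_ge_atTop 1] with n hn hn1
  have hS : (0:ℝ) < ∑ i ∈ Finset.range n, X i ω :=
    Finset.sum_pos (fun i _ => hpos i ω) ⟨0, Finset.mem_range.2 (by omega)⟩
  -- key pointwise bound
  have key : ∀ x : ℝ, |empIncMoment X n ω x - incMoment (X 0) x| ≤ 2/(k:ℝ) := by
    intro x
    rw [heqQ]
    refine gc_core (fun y => mfun (X 0) y / μ) (fun y => mfun' (X 0) y / μ)
      (fun y => empIncMoment X n ω y)
      (fun y => (∑ i ∈ Finset.range n, if X i ω < y then X i ω else 0) /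
        (∑ i ∈ Finset.range n, X i ω)) k hk2 xg
      ?_ ?_ ?_ ?_ ?_ ?_ ?_ ?_ ?_ ?_ ?_ ?_ x
    · intro a b hab
      exact div_le_div_of_nonneg_right (mfun_mono (X 0) hYm hint hp0 hab) hμpos.le
    · intro y
      exact div_nonneg (mfun_nonneg (X 0) hp0 y) hμpos.le
    · intro y
      rw [div_le_one hμpos]
      exact hμdef ▸ mfun_le (X 0) hYm hint hp0 y
    · intro y x' hyx
      exact div_le_div_of_nonneg_right (mfun_le_mfun' (X 0) hYm hint hp0 hyx) hμpos.le
    · intro a b hab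
      simp only [empIncMoment]
      apply div_le_div_of_nonneg_right _ hS.le
      apply Finset.sum_le_sum
      intro i _
      by_cases h : X i ω ≤ a
      · rw [if_pos h, if_pos (h.trans hab)]
      · rw [if_neg h]
        split_ifs
        · exact (hpos i ω).le
        · exact le_rfl
    · intro y
      simp only [empIncMoment]
      apply div_nonneg _ hS.le
      apply Finset.sum_nonneg
      intro i _
      split_ifs
      · exact (hpos i ω).le
      · exact le_rfl
    · intro y
      simp only [empIncMoment]
      rw [div_le_one hS]
      apply Finset.sum_le_sum
      intro i _
      split_ifs
      · exact le_rfl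
      · exact (hpos i ω).le
    · intro y x' hyx
      simp only [empIncMoment]
      apply div_le_div_of_nonneg_right _ hS.le
      apply Finset.sum_le_sum
      intro i _
      by_cases h : X i ω ≤ y
      · rw [if_pos h, if_pos (lt_of_le_of_lt h hyx)]
      · rw [if_neg h]
        split_ifs
        · exact (hpos i ω).le
        · exact le_rfl
    · intro j hj1 hjk
      refine hg1R ((j:ℝ)/(k:ℝ)) ?_ ?_
      · apply div_pos _ hkpos
        exact_mod_cast Nat.pos_of_ne_zero (by omega)
      · rw [div_lt_one hkpos]
        exact_mod_cast (by omega : j < k)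
    · intro j x' hj1 hjk hx'
      refine hg2R ((j:ℝ)/(k:ℝ)) x' ?_ hx'
      apply div_pos _ hkpos
      exact_mod_cast Nat.pos_of_ne_zero (by omega)
    · intro j hj1 hjk
      refine hg3R ((j:ℝ)/(k:ℝ)) ?_ ?_
      · apply div_pos _ hkpos
        exact_mod_cast Nat.pos_of_ne_zero (by omega)
      · rw [div_lt_one hkpos]
        exact_mod_cast (by omega : j < k)
    · intro j hj1 hjk
      exact hn j (Finset.mem_Icc.2 ⟨hj1, hjk⟩)
  have hsup_le : (⨆ x : {x : ℝ // 0 < x},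
      |empIncMoment X n ω x - incMoment (X 0) x|) ≤ 2/(k:ℝ) :=
    ciSup_le fun x => key x
  have hsup_nonneg : 0 ≤ ⨆ x : {x : ℝ // 0 < x},
      |empIncMoment X n ω x - incMoment (X 0) x| :=
    Real.iSup_nonneg fun x => abs_nonneg _
  rw [Real.norm_eq_abs, abs_of_nonneg hsup_nonneg]
  exact lt_of_le_of_lt hsup_le hkε
end
end

section
/- Let X₁, X₂, … be i.i.d. positive random variables with finite mean, whose CDF F is continuous and strictly increasing on its support, and let λ(p) be the Zenga inequality curve of F. Define F_n(x) = (1/n) Σ_{i=1}^n 1{X_i ≤ x}, Q_n(x) = (Σ_{i=1}^n X_i 1{X_i ≤ x}) / (Σ_{i=1}^n X_i), L_n(p) = Q_n(F_n⁻¹(p)), and λ̂_n(p) = 1 − log(1 − L_n(p))/log(1 − p). Then for every fixed p ∈ (0,1), λ̂_n(p) → λ(p) almost surely as n → ∞. -/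
open MeasureTheory Real Set Filter

noncomputable section

/-- Empirical CDF `F_n(x) = (1/n) Σ_{i<n} 1{X_i ≤ x}`. -/
def empCDF {Ω : Type*} (X : ℕ → Ω → ℝ) (n : ℕ) (ω : Ω) (x : ℝ) : ℝ :=
  (∑ i ∈ Finset.range n, if X i ω ≤ x then (1 : ℝ) else 0) / n

/-- Empirical Lorenz curve `L_n(p) = Q_n(F_n⁻¹(p))`. -/
def empLorenz {Ω : Type*} (X : ℕ → Ω → ℝ) (n : ℕ) (ω : Ω) (p : ℝ) : ℝ :=
  empIncMoment X n ω (quantile (empCDF X n ω) p)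

/-- Empirical Zenga curve `λ̂_n(p) = 1 - log(1 - L_n(p)) / log(1 - p)`. -/
def empZenga {Ω : Type*} (X : ℕ → Ω → ℝ) (n : ℕ) (ω : Ω) (p : ℝ) : ℝ :=
  1 - Real.log (1 - empLorenz X n ω p) / Real.log (1 - p)

section AuxZenga
open Topology

lemma quantile_tendsto {F : ℝ → ℝ} {Fn : ℕ → ℝ → ℝ} {p : ℝ}
    (hmonoFn : ∀ n, Monotone (Fn n))
    (hconv : ∀ a : ℚ, Tendsto (fun n => Fn n (a : ℝ)) atTop (𝓝 (F a)))
    (hlt : ∀ a : ℝ, a < quantile F p → F a < p)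
    (hgt : ∀ b : ℝ, quantile F p < b → p < F b) :
    Tendsto (fun n => quantile (Fn n) p) atTop (𝓝 (quantile F p)) := by
  set q := quantile F p with hq
  rw [tendsto_order]
  constructor
  · intro a' ha'
    obtain ⟨a, ha1, ha2⟩ := exists_rat_btwn ha'
    obtain ⟨b, hb1, hb2⟩ := exists_rat_btwn (lt_add_one q)
    have h1 : ∀ᶠ n in atTop, Fn n a < p :=
      (hconv a).eventually_lt_const (hlt a ha2)
    have h2 : ∀ᶠ n in atTop, p < Fn n b :=
      (hconv b).eventually_const_lt (hgt b hb1)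
    filter_upwards [h1, h2] with n hn1 hn2
    have hmem : (b : ℝ) ∈ {x : ℝ | p ≤ Fn n x} := le_of_lt hn2
    have hlb : (a : ℝ) ≤ quantile (Fn n) p := by
      rw [quantile]; apply le_csInf ⟨(b:ℝ), hmem⟩
      intro x hx
      by_contra hax
      push_neg at hax
      exact absurd (le_trans hx (hmonoFn n hax.le)) (not_le_of_gt hn1)
    exact lt_of_lt_of_le ha1 hlb
  · intro b' hb'
    obtain ⟨b, hb1, hb2⟩ := exists_rat_btwn hb'
    obtain ⟨a, ha1, ha2⟩ := exists_rat_btwn (sub_one_lt q)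
    have h1 : ∀ᶠ n in atTop, Fn n a < p :=
      (hconv a).eventually_lt_const (hlt a ha2)
    have h2 : ∀ᶠ n in atTop, p < Fn n b :=
      (hconv b).eventually_const_lt (hgt b hb1)
    filter_upwards [h1, h2] with n hn1 hn2
    have hmem : (b : ℝ) ∈ {x : ℝ | p ≤ Fn n x} := le_of_lt hn2
    have hbdd : BddBelow {x : ℝ | p ≤ Fn n x} := by
      refine ⟨a, fun x hx => ?_⟩
      by_contra hax
      push_neg at hax
      exact absurd (le_trans hx (hmonoFn n hax.le)) (not_le_of_gt hn1)
    exact lt_of_le_of_lt (csInf_le hbdd hmem) hb2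

lemma tendsto_eval_quantile {Q : ℝ → ℝ} {Hn : ℕ → ℝ → ℝ} {qn : ℕ → ℝ} {q L : ℝ}
    (hmonoHn : ∀ n, Monotone (Hn n))
    (hconv : ∀ a : ℚ, Tendsto (fun n => Hn n (a : ℝ)) atTop (𝓝 (Q a)))
    (hqn : Tendsto qn atTop (𝓝 q))
    (happrox : ∀ ε > (0:ℝ), ∃ a b : ℚ, (a:ℝ) < q ∧ q < b ∧ L - ε < Q a ∧ Q b < L + ε) :
    Tendsto (fun n => Hn n (qn n)) atTop (𝓝 L) := by
  rw [Metric.tendsto_atTop]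
  intro ε hε
  obtain ⟨a, b, hab1, hab2, hQa, hQb⟩ := happrox ε hε
  have h1 : ∀ᶠ n in atTop, (a:ℝ) < qn n := hqn.eventually_const_lt hab1
  have h2 : ∀ᶠ n in atTop, qn n < b := hqn.eventually_lt_const hab2
  have h3 : ∀ᶠ n in atTop, L - ε < Hn n a := by
    have := (hconv a).eventually_const_lt hQa
    exact this
  have h4 : ∀ᶠ n in atTop, Hn n b < L + ε := (hconv b).eventually_lt_const hQb
  have := (h1.and (h2.and (h3.and h4))).exists_forall_of_atTop
  obtain ⟨N, hN⟩ := this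
  refine ⟨N, fun n hn => ?_⟩
  obtain ⟨k1, k2, k3, k4⟩ := hN n hn
  have hlow : L - ε < Hn n (qn n) := lt_of_lt_of_le k3 (hmonoHn n k1.le)
  have hhigh : Hn n (qn n) < L + ε := lt_of_le_of_lt (hmonoHn n k2.le) k4
  rw [Real.dist_eq, abs_lt]
  constructor <;> linarith

lemma cdf_facts {Ω : Type*} [MeasureSpace Ω] [IsProbabilityMeasure (volume : Measure Ω)]
    (Y : Ω → ℝ) (hpos : ∀ ω, 0 < Y ω)
    (hcont : Continuous (cdfOf Y))
    (hmono : StrictMonoOn (cdfOf Y) {x | 0 < cdfOf Y x ∧ cdfOf Y x < 1})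
    {p : ℝ} (hp : p ∈ Ioo (0:ℝ) 1) :
    0 < quantile (cdfOf Y) p ∧ cdfOf Y (quantile (cdfOf Y) p) = p ∧
      (∀ a : ℝ, a < quantile (cdfOf Y) p → cdfOf Y a < p) ∧
      (∀ b : ℝ, quantile (cdfOf Y) p < b → p < cdfOf Y b) := by
  set F := cdfOf Y with hF
  set q := quantile F p with hq
  have hzero : ∀ x : ℝ, x ≤ 0 → F x = 0 := by
    intro x hx
    have : {ω | Y ω ≤ x} = (∅ : Set Ω) := by
      ext ω; simp only [mem_setOf_eq, mem_empty_iff_false, iff_false, not_le]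
      exact lt_of_le_of_lt hx (hpos ω)
    rw [hF, cdfOf, this, measure_empty]; simp
  have hle1 : ∀ x : ℝ, F x ≤ 1 := by
    intro x
    rw [hF, cdfOf]
    have := measure_mono (subset_univ {ω | Y ω ≤ x}) (μ := (volume : Measure Ω))
    rw [measure_univ] at this
    calc ((volume : Measure Ω) {ω | Y ω ≤ x}).toReal ≤ (1 : ENNReal).toReal :=
      ENNReal.toReal_mono (by simp) this
    _ = 1 := by simp
  have hne : ∃ x : ℝ, p ≤ F x := by
    have hmonoS : Monotone fun n : ℕ => {ω | Y ω ≤ (n : ℝ)} := by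
      intro m n hmn ω hω
      simp only [mem_setOf_eq] at hω ⊢
      exact le_trans hω (Nat.cast_le.mpr hmn)
    have hU : (⋃ n : ℕ, {ω | Y ω ≤ (n : ℝ)}) = univ := by
      ext ω; simp only [mem_iUnion, mem_setOf_eq, mem_univ, iff_true]
      exact exists_nat_ge (Y ω)
    have ht := tendsto_measure_iUnion_atTop (μ := (volume : Measure Ω)) hmonoS
    rw [hU, measure_univ] at ht
    have hplt : ENNReal.ofReal p < 1 := by
      rw [← ENNReal.ofReal_one]
      exact ENNReal.ofReal_lt_ofReal_iff_of_nonneg hp.1.le |>.2 hp.2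
    have := ht.eventually_const_lt hplt
    obtain ⟨n, hn⟩ := this.exists
    refine ⟨n, ?_⟩
    rw [hF, cdfOf]
    rw [← ENNReal.ofReal_le_iff_le_toReal (measure_ne_top _ _)]
    exact hn.le
  have hSbdd : BddBelow {x : ℝ | p ≤ F x} := by
    refine ⟨0, fun x hx => ?_⟩
    by_contra hx0
    push_neg at hx0
    have hx' : p ≤ F x := hx
    rw [hzero x hx0.le] at hx'
    exact absurd (lt_of_lt_of_le hp.1 hx') (lt_irrefl 0)
  have hSclosed : IsClosed {x : ℝ | p ≤ F x} := isClosed_le continuous_const hcont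
  have hqmem : q ∈ {x : ℝ | p ≤ F x} := hSclosed.csInf_mem hne hSbdd
  have hqpos : 0 < q := by
    by_contra h
    push_neg at h
    have := hqmem
    rw [mem_setOf_eq, hzero q h] at this
    exact absurd (lt_of_lt_of_le hp.1 this) (lt_irrefl 0)
  have hlt : ∀ a : ℝ, a < q → F a < p := by
    intro a ha
    by_contra h
    push_neg at h
    exact absurd (csInf_le hSbdd h) (not_le_of_gt ha)
  have hFq : F q = p := by
    refine le_antisymm ?_ hqmem
    have htd : Tendsto F (𝓝[<] q) (𝓝 (F q)) :=
      (hcont.tendsto q).mono_left nhdsWithin_le_nhds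
    exact le_of_tendsto htd (eventually_nhdsWithin_of_forall fun x hx => (hlt x hx).le)
  have hFmono : Monotone F := by
    intro x y hxy
    exact ENNReal.toReal_mono (measure_ne_top _ _)
      (measure_mono fun ω hω => le_trans hω hxy)
  have hgt : ∀ b : ℝ, q < b → p < F b := by
    intro b hb
    have h1 : p ≤ F b := hFq ▸ hFmono hb.le
    rcases eq_or_lt_of_le h1 with h | h
    · exfalso
      have hbS : b ∈ {x | 0 < F x ∧ F x < 1} := ⟨h ▸ hp.1, h ▸ hp.2⟩
      have hqS : q ∈ {x | 0 < F x ∧ F x < 1} := ⟨hFq ▸ hp.1, hFq ▸ hp.2⟩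
      have := hmono hqS hbS hb
      rw [hFq, ← h] at this
      exact lt_irrefl p this
    · exact h
  exact ⟨hqpos, hFq, hlt, hgt⟩

lemma slln_comp {Ω : Type*} [MeasureSpace Ω] [IsProbabilityMeasure (volume : Measure Ω)]
    (X : ℕ → Ω → ℝ) (hmeas : ∀ i, Measurable (X i))
    (hindep : ProbabilityTheory.iIndepFun X volume)
    (hident : ∀ i, ProbabilityTheory.IdentDistrib (X i) (X 0) volume volume)
    (g : ℝ → ℝ) (hg : Measurable g) (hgint : Integrable (fun ω => g (X 0 ω))) :
    ∀ᵐ ω ∂(volume : Measure Ω),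
      Tendsto (fun n => (∑ i ∈ Finset.range n, g (X i ω)) / n) atTop
        (𝓝 (∫ ω, g (X 0 ω))) := by
  have := ProbabilityTheory.strong_law_ae_real (μ := (volume : Measure Ω))
    (fun i => g ∘ X i) hgint
    (fun i j hij => ((hindep.indepFun hij).comp hg hg))
    (fun i => (hident i).comp hg)
  filter_upwards [this] with ω hω
  exact hω

variable {Ω : Type*} [MeasureSpace Ω] [IsProbabilityMeasure (volume : Measure Ω)]
  {Y : Ω → ℝ}

lemma intY_pos (hYmeas : Measurable Y) (hpos : ∀ ω, 0 < Y ω) (hint : Integrable Y) :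
    0 < ∫ ω, Y ω := by
  rw [integral_pos_iff_support_of_nonneg (fun ω => (hpos ω).le) hint]
  have : Function.support Y = univ := by
    ext ω; simp [Function.mem_support, ne_of_gt (hpos ω)]
  rw [this, measure_univ]
  exact one_pos

lemma G_mono (hYmeas : Measurable Y) (hpos : ∀ ω, 0 < Y ω) (hint : Integrable Y) :
    Monotone (fun x => ∫ ω in {ω | Y ω ≤ x}, Y ω) := by
  intro a b hab
  apply setIntegral_mono_set hint.integrableOn
    (Eventually.of_forall fun ω => (hpos ω).le)
  exact HasSubset.Subset.eventuallyLE (fun ω hω => le_trans hω hab)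

lemma G_diff_le (hYmeas : Measurable Y) (hpos : ∀ ω, 0 < Y ω) (hint : Integrable Y)
    {a b : ℝ} (hab : a ≤ b) :
    (∫ ω in {ω | Y ω ≤ b}, Y ω) - (∫ ω in {ω | Y ω ≤ a}, Y ω)
      ≤ b * (cdfOf Y b - cdfOf Y a) := by
  have hma : MeasurableSet {ω | Y ω ≤ a} := hYmeas measurableSet_Iic
  have hmb : MeasurableSet {ω | Y ω ≤ b} := hYmeas measurableSet_Iic
  have hsub : {ω | Y ω ≤ a} ⊆ {ω | Y ω ≤ b} := fun ω hω => le_trans hω hab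
  have hdiff := integral_diff (μ := (volume : Measure Ω)) (f := Y) hma
    hint.integrableOn hsub
  rw [← hdiff]
  have hmus : (volume : Measure Ω) ({ω | Y ω ≤ b} \ {ω | Y ω ≤ a})
      = (volume : Measure Ω) {ω | Y ω ≤ b} - (volume : Measure Ω) {ω | Y ω ≤ a} :=
    measure_diff hsub hma.nullMeasurableSet (measure_ne_top _ _)
  have htr : ((volume : Measure Ω) ({ω | Y ω ≤ b} \ {ω | Y ω ≤ a})).toReal
      = cdfOf Y b - cdfOf Y a := by
    rw [hmus, ENNReal.toReal_sub_of_le (measure_mono hsub) (measure_ne_top _ _)]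
    rfl
  calc (∫ ω in {ω | Y ω ≤ b} \ {ω | Y ω ≤ a}, Y ω)
      ≤ ∫ _ in {ω | Y ω ≤ b} \ {ω | Y ω ≤ a}, b := by
        apply setIntegral_mono_on hint.integrableOn (integrable_const b).integrableOn
          (hmb.diff hma)
        intro ω hω
        exact hω.1
    _ = b * (cdfOf Y b - cdfOf Y a) := by
        rw [setIntegral_const, measureReal_def, htr, smul_eq_mul, mul_comm]

lemma G_lt_total (hYmeas : Measurable Y) (hpos : ∀ ω, 0 < Y ω) (hint : Integrable Y)
    {q : ℝ} (hq : 0 < q) (hFq : cdfOf Y q < 1) :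
    (∫ ω in {ω | Y ω ≤ q}, Y ω) < ∫ ω, Y ω := by
  have hmq : MeasurableSet {ω | Y ω ≤ q} := hYmeas measurableSet_Iic
  have hsplit : (∫ ω in {ω | Y ω ≤ q}, Y ω) + (∫ ω in {ω | Y ω ≤ q}ᶜ, Y ω) = ∫ ω, Y ω :=
    integral_add_compl hmq hint
  have hcompl : ((volume : Measure Ω) {ω | Y ω ≤ q}ᶜ).toReal = 1 - cdfOf Y q := by
    rw [measure_compl hmq (measure_ne_top _ _), measure_univ,
      ENNReal.toReal_sub_of_le (prob_le_one) (by simp)]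
    simp [cdfOf]
  have hlb : q * (1 - cdfOf Y q) ≤ ∫ ω in {ω | Y ω ≤ q}ᶜ, Y ω := by
    calc q * (1 - cdfOf Y q) = ∫ _ in {ω | Y ω ≤ q}ᶜ, q := by
          rw [setIntegral_const, measureReal_def, hcompl, smul_eq_mul, mul_comm]
      _ ≤ ∫ ω in {ω | Y ω ≤ q}ᶜ, Y ω := by
          apply setIntegral_mono_on (integrable_const q).integrableOn
            hint.integrableOn hmq.compl
          intro ω hω
          exact le_of_lt (not_le.mp hω)
  have hppos : 0 < q * (1 - cdfOf Y q) := mul_pos hq (by linarith)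
  linarith

lemma cdfOf_mono : Monotone (cdfOf Y) := fun x y hxy =>
  ENNReal.toReal_mono (measure_ne_top _ _) (measure_mono fun ω hω => le_trans hω hxy)




end AuxZenga

open Topology

/-- Pointwise strong consistency of the empirical Zenga curve: for every
fixed `p ∈ (0,1)`, `λ̂_n(p) → λ(p)` almost surely. -/
theorem empZenga_consistent {Ω : Type*} [MeasureSpace Ω]
    [IsProbabilityMeasure (volume : Measure Ω)]
    (X : ℕ → Ω → ℝ) (hmeas : ∀ i, Measurable (X i))
    (hindep : ProbabilityTheory.iIndepFun X volume)
    (hident : ∀ i, ProbabilityTheory.IdentDistrib (X i) (X 0) volume volume)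
    (hpos : ∀ i ω, 0 < X i ω) (hint : Integrable (X 0))
    (hcont : Continuous (cdfOf (X 0)))
    (hmono : StrictMonoOn (cdfOf (X 0))
      {x | 0 < cdfOf (X 0) x ∧ cdfOf (X 0) x < 1}) :
    ∀ p ∈ Ioo (0 : ℝ) 1,
      ∀ᵐ ω ∂(volume : Measure Ω),
        Tendsto (fun n => empZenga X n ω p) atTop (nhds (zenga (X 0) p)) := by
  intro p hp
  obtain ⟨hqpos, hFq, hflt, hfgt⟩ := cdf_facts (X 0) (hpos 0) hcont hmono hp
  set q := quantile (cdfOf (X 0)) p with hqdef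
  set μ0 := ∫ ω, X 0 ω with hmu0
  have hμ0pos : 0 < μ0 := intY_pos (hmeas 0) (hpos 0) hint
  set G : ℝ → ℝ := fun x => ∫ ω in {ω | X 0 ω ≤ x}, X 0 ω with hGdef
  set L : ℝ := G q / μ0 with hLdef
  have h1 : ∀ᵐ ω ∂(volume : Measure Ω), ∀ a : ℚ, Tendsto
      (fun n => (∑ i ∈ Finset.range n, if X i ω ≤ (a:ℝ) then (1:ℝ) else 0) / n)
      atTop (𝓝 (cdfOf (X 0) a)) := by
    rw [ae_all_iff]
    intro a
    have hg : Measurable (fun t : ℝ => if t ≤ (a:ℝ) then (1:ℝ) else 0) :=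
      Measurable.ite measurableSet_Iic measurable_const measurable_const
    have hgint : Integrable (fun ω => if X 0 ω ≤ (a:ℝ) then (1:ℝ) else 0) := by
      apply Integrable.mono' (integrable_const (1:ℝ))
        ((hg.comp (hmeas 0)).aestronglyMeasurable)
      apply Eventually.of_forall
      intro ω
      by_cases h : X 0 ω ≤ (a:ℝ) <;> simp [h]
    have hthis := slln_comp X hmeas hindep hident _ hg hgint
    have hint_eq : (∫ ω, if X 0 ω ≤ (a:ℝ) then (1:ℝ) else 0) = cdfOf (X 0) a := by
      have hrw : (fun ω => if X 0 ω ≤ (a:ℝ) then (1:ℝ) else 0)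
          = Set.indicator {ω | X 0 ω ≤ (a:ℝ)} (fun _ => (1:ℝ)) := by
        ext ω
        by_cases h : X 0 ω ≤ (a:ℝ) <;> simp [Set.indicator_apply, h]
      have hms : MeasurableSet {ω | X 0 ω ≤ (a:ℝ)} := (hmeas 0) measurableSet_Iic
      rw [hrw, integral_indicator_const (1:ℝ) hms]
      simp [cdfOf, measureReal_def]
    rw [hint_eq] at hthis
    exact hthis
  have h2 : ∀ᵐ ω ∂(volume : Measure Ω), ∀ a : ℚ, Tendsto
      (fun n => (∑ i ∈ Finset.range n, if X i ω ≤ (a:ℝ) then X i ω else 0) / n)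
      atTop (𝓝 (G a)) := by
    rw [ae_all_iff]
    intro a
    have hg : Measurable (fun t : ℝ => if t ≤ (a:ℝ) then t else 0) :=
      Measurable.ite measurableSet_Iic measurable_id measurable_const
    have hgint : Integrable (fun ω => if X 0 ω ≤ (a:ℝ) then X 0 ω else 0) := by
      apply Integrable.mono hint ((hg.comp (hmeas 0)).aestronglyMeasurable)
      apply Eventually.of_forall
      intro ω
      by_cases h : X 0 ω ≤ (a:ℝ) <;> simp [h, abs_nonneg]
    have hthis := slln_comp X hmeas hindep hident _ hg hgint
    have hint_eq : (∫ ω, if X 0 ω ≤ (a:ℝ) then X 0 ω else 0) = G a := by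
      have hrw : (fun ω => if X 0 ω ≤ (a:ℝ) then X 0 ω else 0)
          = Set.indicator {ω | X 0 ω ≤ (a:ℝ)} (X 0) := by
        ext ω
        by_cases h : X 0 ω ≤ (a:ℝ) <;> simp [Set.indicator_apply, h]
      have hms : MeasurableSet {ω | X 0 ω ≤ (a:ℝ)} := (hmeas 0) measurableSet_Iic
      rw [hrw, integral_indicator hms]
    rw [hint_eq] at hthis
    exact hthis
  have h3 : ∀ᵐ ω ∂(volume : Measure Ω), Tendsto
      (fun n => (∑ i ∈ Finset.range n, X i ω) / n) atTop (𝓝 μ0) :=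
    slln_comp X hmeas hindep hident id measurable_id hint
  filter_upwards [h1, h2, h3] with ω hω1 hω2 hω3
  have hFnmono : ∀ n, Monotone (empCDF X n ω) := by
    intro n x y hxy
    have hsum : (∑ i ∈ Finset.range n, if X i ω ≤ x then (1:ℝ) else 0)
        ≤ ∑ i ∈ Finset.range n, if X i ω ≤ y then (1:ℝ) else 0 := by
      apply Finset.sum_le_sum
      intro i _
      by_cases h : X i ω ≤ x
      · simp [h, le_trans h hxy]
      · by_cases h' : X i ω ≤ y <;> simp [h, h']
    exact div_le_div_of_nonneg_right hsum (Nat.cast_nonneg n)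
  have hqn : Tendsto (fun n => quantile (empCDF X n ω) p) atTop (𝓝 q) := by
    apply quantile_tendsto hFnmono _ hflt hfgt
    intro a
    exact hω1 a
  have hHnmono : ∀ n, Monotone (empIncMoment X n ω) := by
    intro n x y hxy
    have hsum : (∑ i ∈ Finset.range n, if X i ω ≤ x then X i ω else 0)
        ≤ ∑ i ∈ Finset.range n, if X i ω ≤ y then X i ω else 0 := by
      apply Finset.sum_le_sum
      intro i _
      by_cases h : X i ω ≤ x
      · simp [h, le_trans h hxy]
      · by_cases h' : X i ω ≤ y <;> simp [h, h', (hpos i ω).le]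
    exact div_le_div_of_nonneg_right hsum
      (Finset.sum_nonneg fun i _ => (hpos i ω).le)
  have hHnconv : ∀ a : ℚ, Tendsto (fun n => empIncMoment X n ω a) atTop
      (𝓝 (G a / μ0)) := by
    intro a
    have hdiv := (hω2 a).div hω3 (ne_of_gt hμ0pos)
    apply hdiv.congr'
    filter_upwards [eventually_ge_atTop 1] with n hn
    have hnne : ((n:ℝ)) ≠ 0 := Nat.cast_ne_zero.2 (by omega)
    exact div_div_div_cancel_right₀ hnne _ _
  have happrox : ∀ ε > (0:ℝ), ∃ a b : ℚ, (a:ℝ) < q ∧ q < (b:ℝ) ∧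
      L - ε < G a / μ0 ∧ G b / μ0 < L + ε := by
    intro ε hε
    have hδ : (0:ℝ) < ε * μ0 := mul_pos hε hμ0pos
    have hq1 : (0:ℝ) < q + 1 := by linarith
    obtain ⟨η, hη, hball⟩ := Metric.continuousAt_iff.1 (hcont.continuousAt (x := q))
      (ε * μ0 / (2 * (q + 1))) (by positivity)
    set η' := min η 1 with hη'
    have hη'pos : 0 < η' := lt_min hη one_pos
    have hη'le : η' ≤ η := min_le_left η 1
    have hη'le1 : η' ≤ 1 := min_le_right η 1
    obtain ⟨a, ha1, ha2⟩ := exists_rat_btwn (show q - η' < q by linarith)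
    obtain ⟨b, hb1, hb2⟩ := exists_rat_btwn (show q < q + η' by linarith)
    have hfa : |cdfOf (X 0) a - cdfOf (X 0) q| < ε * μ0 / (2 * (q + 1)) := by
      apply hball
      rw [Real.dist_eq, abs_lt]
      constructor <;> linarith
    have hfb : |cdfOf (X 0) b - cdfOf (X 0) q| < ε * μ0 / (2 * (q + 1)) := by
      apply hball
      rw [Real.dist_eq, abs_lt]
      constructor <;> linarith
    have hab : (a:ℝ) ≤ b := le_trans ha2.le hb1.le
    have hFab : cdfOf (X 0) b - cdfOf (X 0) a < ε * μ0 / (q + 1) := by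
      have e1 := abs_lt.1 hfa
      have e2 := abs_lt.1 hfb
      have : ε * μ0 / (2 * (q + 1)) + ε * μ0 / (2 * (q + 1)) = ε * μ0 / (q + 1) := by
        field_simp
        ring
      linarith
    have hFabnn : 0 ≤ cdfOf (X 0) b - cdfOf (X 0) a :=
      sub_nonneg.2 (cdfOf_mono (Y := X 0) hab)
    have hGd := G_diff_le (hmeas 0) (hpos 0) hint hab
    have hbq1 : (b:ℝ) ≤ q + 1 := by linarith
    have hGab : G b - G a < ε * μ0 := by
      have e1 : (b:ℝ) * (cdfOf (X 0) b - cdfOf (X 0) a)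
          ≤ (q + 1) * (cdfOf (X 0) b - cdfOf (X 0) a) :=
        mul_le_mul_of_nonneg_right hbq1 hFabnn
      have e2 : (q + 1) * (cdfOf (X 0) b - cdfOf (X 0) a)
          < (q + 1) * (ε * μ0 / (q + 1)) :=
        mul_lt_mul_of_pos_left hFab hq1
      have e3 : (q + 1) * (ε * μ0 / (q + 1)) = ε * μ0 := by
        field_simp
      calc G b - G a ≤ (b:ℝ) * (cdfOf (X 0) b - cdfOf (X 0) a) := hGd
        _ ≤ (q + 1) * (cdfOf (X 0) b - cdfOf (X 0) a) := e1
        _ < ε * μ0 := by rw [← e3]; exact e2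
    have hGm := G_mono (hmeas 0) (hpos 0) hint
    have hGaq : G a ≤ G q := hGm ha2.le
    have hGqb : G q ≤ G b := hGm hb1.le
    have hLmul : L * μ0 = G q := div_mul_cancel₀ _ (ne_of_gt hμ0pos)
    refine ⟨a, b, ha2, hb1, ?_, ?_⟩
    · rw [lt_div_iff₀ hμ0pos, sub_mul, hLmul]
      linarith
    · rw [div_lt_iff₀ hμ0pos, add_mul, hLmul]
      linarith
  have hL : Tendsto (fun n => empIncMoment X n ω (quantile (empCDF X n ω) p))
      atTop (𝓝 L) :=
    tendsto_eval_quantile (Q := fun x => G x / μ0) (Hn := fun n => empIncMoment X n ω)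
      (qn := fun n => quantile (empCDF X n ω) p) hHnmono hHnconv hqn happrox
  have hL1 : L < 1 := by
    rw [hLdef, div_lt_one hμ0pos]
    exact G_lt_total (hmeas 0) (hpos 0) hint hqpos (by rw [hFq]; exact hp.2)
  have h1L : (0:ℝ) < 1 - L := by linarith
  have hlog : Tendsto
      (fun n => Real.log (1 - empIncMoment X n ω (quantile (empCDF X n ω) p))) atTop
      (𝓝 (Real.log (1 - L))) :=
    ((Real.continuousAt_log (ne_of_gt h1L)).tendsto).comp (tendsto_const_nhds.sub hL)
  have hinc : incMoment (X 0) q = L := rfl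
  have hfinal := tendsto_const_nhds (α := ℕ) (f := atTop) (x := (1:ℝ)) |>.sub
    (hlog.div_const (Real.log (1 - p)))
  simp only [empZenga, empLorenz, zenga, ← hqdef, hinc]
  exact hfinal
end
end
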